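/- arXiv:2602.19340 — 10 statements merged into one kernel-verified Lean document; each statement's English description precedes it below -/
import Mathlib

section
/- Suppose the positive integer k is divisible by the exponent of some finite non-soluble group. Then for every ε with 0 < ε < 1 there exists a finite non-soluble group G such that ρ_k^*(G) > ε. -/
open Finset

/-- The proportion of elements of a finite group `G` of order dividing `k`. -/
noncomputable def rho (G : Type*) [Group G] (k : ℕ) : ℚ :=
  (Nat.card {g : G // g ^ k = 1} : ℚ) / (Nat.card G : ℚ)

/-- The proportion of elements of a finite group `G` of order exactly `k`. -/
noncomputable def rhoStar (G : Type*) [Group G] (k : ℕ) : ℚ :=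
  (Nat.card {g : G // orderOf g = k} : ℚ) / (Nat.card G : ℚ)

private lemma aux_cyclic_bound (k d : ℕ) [NeZero k] (hd : 0 < d) :
    Nat.card {y : Multiplicative (ZMod k) // y ^ d = 1} ≤ d := by
  classical
  rw [Nat.card_eq_fintype_card, Fintype.card_subtype]
  exact IsCyclic.card_pow_eq_one_le hd

private lemma aux_pi_card (M : Type) [Group M] [Fintype M] (n d : ℕ) :
    Nat.card {x : Fin n → M // x ^ d = 1} = (Nat.card {y : M // y ^ d = 1}) ^ n := by
  have e : {x : Fin n → M // x ^ d = 1} ≃ (Fin n → {y : M // y ^ d = 1}) :=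
    { toFun := fun x i => ⟨x.1 i, congrFun x.2 i⟩
      invFun := fun f => ⟨fun i => (f i).1, funext fun i => (f i).2⟩
      left_inv := fun x => rfl
      right_inv := fun f => rfl }
  rw [Nat.card_congr e, Nat.card_fun]
  simp

private lemma aux_pow_k (k : ℕ) [NeZero k] (y : Multiplicative (ZMod k)) : y ^ k = 1 := by
  rw [← ofAdd_toAdd y, ← ofAdd_nsmul, nsmul_eq_mul]
  simp

private lemma aux_bad_bound (k n : ℕ) [NeZero k] :
    Fintype.card {x : Fin n → Multiplicative (ZMod k) // ¬ orderOf x = k} ≤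
      ∑ d ∈ k.properDivisors, (Nat.card {y : Multiplicative (ZMod k) // y ^ d = 1}) ^ n := by
  classical
  set B := Multiplicative (ZMod k)
  have hk : 0 < k := Nat.pos_of_ne_zero (NeZero.ne k)
  rw [Fintype.card_subtype]
  have hsub : (univ.filter (fun x : Fin n → B => ¬ orderOf x = k)) ⊆
      k.properDivisors.biUnion (fun d => univ.filter (fun x : Fin n → B => x ^ d = 1)) := by
    intro x hx
    rw [mem_filter] at hx
    have hxk : x ^ k = 1 := funext fun i => aux_pow_k k (x i)
    have hdvd : orderOf x ∣ k := orderOf_dvd_of_pow_eq_one hxk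
    refine mem_biUnion.2 ⟨orderOf x, ?_, ?_⟩
    · exact Nat.mem_properDivisors.2 ⟨hdvd, lt_of_le_of_ne (Nat.le_of_dvd hk hdvd) hx.2⟩
    · exact mem_filter.2 ⟨mem_univ _, pow_orderOf_eq_one x⟩
  calc (univ.filter (fun x : Fin n → B => ¬ orderOf x = k)).card
      ≤ (k.properDivisors.biUnion
          (fun d => univ.filter (fun x : Fin n → B => x ^ d = 1))).card := card_le_card hsub
    _ ≤ ∑ d ∈ k.properDivisors, (univ.filter (fun x : Fin n → B => x ^ d = 1)).card :=
        card_biUnion_le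
    _ = ∑ d ∈ k.properDivisors, (Nat.card {y : B // y ^ d = 1}) ^ n := by
        refine Finset.sum_congr rfl fun d _ => ?_
        rw [← Fintype.card_subtype, ← Nat.card_eq_fintype_card, aux_pi_card]

/-- If `k` is divisible by the exponent of some finite non-soluble group, then for every
`0 < ε < 1` there is a finite non-soluble group `G` with `ρ_k^*(G) > ε`. -/
theorem exists_nonsolvable_rhoStar_gt_of_exponent_dvd (k : ℕ) (hk : 0 < k)
    (hexp : ∃ (H : Type) (_ : Group H) (_ : Fintype H),
      ¬ IsSolvable H ∧ Monoid.exponent H ∣ k)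
    (ε : ℚ) (hε0 : 0 < ε) (hε1 : ε < 1) :
    ∃ (G : Type) (_ : Group G) (_ : Fintype G),
      ¬ IsSolvable G ∧ ε < rhoStar G k := by
  classical
  obtain ⟨H, _, _, hH, hdvd⟩ := hexp
  haveI : NeZero k := ⟨hk.ne'⟩
  have hε1' : (0:ℚ) < 1 - ε := by linarith
  obtain ⟨n, hn⟩ : ∃ n : ℕ, (k : ℚ) / (1 - ε) < 2 ^ n :=
    pow_unbounded_of_one_lt _ (by norm_num)
  have hkey : (k : ℚ) < (1 - ε) * 2 ^ n := by
    rw [div_lt_iff₀ hε1'] at hn; linarith [hn]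
  set B := Multiplicative (ZMod k) with hB
  set A := (Fin n → B) with hA
  refine ⟨H × A, inferInstance, inferInstance, ?_, ?_⟩
  · intro hs
    haveI := hs
    exact hH (@solvable_of_surjective (H × A) H _ _ (MonoidHom.fst H A)
      (fun h => ⟨(h, 1), rfl⟩) hs)
  -- cardinalities
  have hcardB : Nat.card B = k := by
    rw [Nat.card_eq_fintype_card]; simp [hB, ZMod.card]
  have hcardA : Nat.card A = k ^ n := by
    rw [hA, Nat.card_fun, hcardB]; simp
  set good := Nat.card {x : A // orderOf x = k} with hgood
  set bad := Nat.card {x : A // ¬ orderOf x = k} with hbad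
  have hgb : good + bad = k ^ n := by
    rw [hgood, hbad, Nat.card_eq_fintype_card, Nat.card_eq_fintype_card,
      Fintype.card_subtype, Fintype.card_subtype,
      Finset.card_filter_add_card_filter_not, Finset.card_univ,
      ← Nat.card_eq_fintype_card]
    exact hcardA
  -- bad bound
  have hbadle : bad ≤ ∑ d ∈ k.properDivisors, (Nat.card {y : B // y ^ d = 1}) ^ n := by
    rw [hbad, Nat.card_eq_fintype_card]
    exact aux_bad_bound k n
  -- injection into order-k elements of the product
  have hinj : Nat.card H * good ≤ Nat.card {g : H × A // orderOf g = k} := by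
    have hF : ∀ p : H × {x : A // orderOf x = k}, orderOf ((p.1, p.2.1) : H × A) = k := by
      intro p
      rw [Prod.orderOf_mk, p.2.2]
      have h1 : orderOf p.1 ∣ k := (Monoid.order_dvd_exponent p.1).trans hdvd
      exact Nat.dvd_antisymm (Nat.lcm_dvd h1 dvd_rfl) (Nat.dvd_lcm_right _ _)
    have := Nat.card_le_card_of_injective
      (f := fun p : H × {x : A // orderOf x = k} => (⟨(p.1, p.2.1), hF p⟩ :
        {g : H × A // orderOf g = k}))
      (fun p q hpq => by
        have h1 := Subtype.ext_iff.1 hpq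
        obtain ⟨h2, h3⟩ := Prod.ext_iff.1 h1
        exact Prod.ext h2 (Subtype.ext h3))
    rwa [Nat.card_prod] at this
  -- rational arithmetic
  have hDpos : (0:ℚ) < (Nat.card (H × A) : ℚ) := by
    exact_mod_cast Nat.card_pos
  rw [rhoStar, lt_div_iff₀ hDpos]
  have hkq : (0:ℚ) < (k:ℚ) := by exact_mod_cast hk
  have hknq : (0:ℚ) < (k:ℚ) ^ n := pow_pos hkq n
  have h2n : (0:ℚ) < (2:ℚ) ^ n := by positivity
  -- bound the sum in ℚ
  have hsum : ((∑ d ∈ k.properDivisors, (Nat.card {y : B // y ^ d = 1}) ^ n : ℕ) : ℚ) ≤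
      (k:ℚ) * ((k:ℚ)/2) ^ n := by
    push_cast
    calc ∑ d ∈ k.properDivisors, ((Nat.card {y : B // y ^ d = 1} : ℚ)) ^ n
        ≤ ∑ d ∈ k.properDivisors, ((k:ℚ)/2) ^ n := by
          refine Finset.sum_le_sum fun d hd => ?_
          have hd0 : 0 < d := Nat.pos_of_mem_divisors (Nat.mem_divisors.2
            ⟨(Nat.mem_properDivisors.1 hd).1, hk.ne'⟩)
          have h1 : (Nat.card {y : B // y ^ d = 1} : ℚ) ≤ (d:ℚ) := by
            exact_mod_cast aux_cyclic_bound k d hd0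
          have h2 : (d:ℚ) ≤ (k:ℚ)/2 := by
            obtain ⟨hdk, hdlt⟩ := Nat.mem_properDivisors.1 hd
            obtain ⟨m, hm⟩ := hdk
            have hm2 : 2 ≤ m := by
              by_contra hc
              push_neg at hc
              interval_cases m <;> omega
            rw [le_div_iff₀ (by norm_num : (0:ℚ) < 2)]
            have hnat : d * 2 ≤ k := by
              calc d * 2 ≤ d * m := Nat.mul_le_mul_left d hm2
                _ = k := hm.symm
            exact_mod_cast hnat
          exact pow_le_pow_left₀ (by positivity) (h1.trans h2) n
      _ = (k.properDivisors.card : ℚ) * ((k:ℚ)/2) ^ n := by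
          rw [Finset.sum_const, nsmul_eq_mul]
      _ ≤ (k:ℚ) * ((k:ℚ)/2) ^ n := by
          have : k.properDivisors.card ≤ k := by
            have : k.properDivisors ⊆ Finset.range k :=
              fun d hd => Finset.mem_range.2 (Nat.mem_properDivisors.1 hd).2
            simpa using Finset.card_le_card this
          have h' : (k.properDivisors.card : ℚ) ≤ (k:ℚ) := by exact_mod_cast this
          exact mul_le_mul_of_nonneg_right h' (by positivity)
  have hlast : (k:ℚ) * ((k:ℚ)/2) ^ n < (1 - ε) * (k:ℚ) ^ n := by
    rw [div_pow, ← mul_div_assoc, div_lt_iff₀ h2n]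
    calc (k:ℚ) * (k:ℚ)^n < ((1-ε) * 2^n) * (k:ℚ)^n :=
          mul_lt_mul_of_pos_right hkey hknq
      _ = (1 - ε) * (k:ℚ)^n * 2^n := by ring
  -- combine
  have hgbq : (good:ℚ) + (bad:ℚ) = (k:ℚ)^n := by exact_mod_cast hgb
  have hbadq : (bad:ℚ) ≤ (k:ℚ) * ((k:ℚ)/2) ^ n := by
    refine le_trans ?_ hsum
    exact_mod_cast hbadle
  have hgoodq : ε * (k:ℚ)^n < (good:ℚ) := by nlinarith
  have hcardprod : (Nat.card (H × A) : ℚ) = (Nat.card H : ℚ) * (k:ℚ)^n := by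
    rw [Nat.card_prod, hcardA]; push_cast; ring
  have hHpos : (0:ℚ) < (Nat.card H : ℚ) := by exact_mod_cast Nat.card_pos
  calc ε * (Nat.card (H × A) : ℚ) = (Nat.card H : ℚ) * (ε * (k:ℚ)^n) := by
        rw [hcardprod]; ring
    _ < (Nat.card H : ℚ) * (good:ℚ) := by
        exact mul_lt_mul_of_pos_left hgoodq hHpos
    _ ≤ (Nat.card {g : H × A // orderOf g = k} : ℚ) := by exact_mod_cast hinj
end

section
/- Let H be a finite group of exponent e. Then the sequence n ↦ ρ_e^*(Hⁿ), where Hⁿ denotes the direct product of n copies of H (i.e. Fin n → H), converges to 1 as n → ∞. Equivalently: for every ε > 0 there exists N such that for all n ≥ N, the proportion of elements of Hⁿ whose order is exactly e is greater than 1 − ε. -/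
open Finset

/-- Let `H` be a finite group of exponent `e`. Then `ρ_e^*(Hⁿ) → 1` as `n → ∞`:
for every `ε > 0` there exists `N` such that for all `n ≥ N`, the proportion of elements
of `Hⁿ = (Fin n → H)` of order exactly `e` exceeds `1 - ε`. -/
theorem rhoStar_pow_tendsto_one (H : Type) [Group H] [Fintype H] (ε : ℚ) (hε : 0 < ε) :
    ∃ N : ℕ, ∀ n ≥ N, 1 - ε < rhoStar (Fin n → H) (Monoid.exponent H) := by
  classical
  set e := Monoid.exponent H with he
  have he0 : e ≠ 0 := Monoid.exponent_ne_zero_of_finite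
  set c := Fintype.card H with hc
  have hc0 : 0 < c := Fintype.card_pos
  set D := (e.properDivisors).card with hD
  -- each proper divisor kills few elements
  have hdiv : ∀ d ∈ e.properDivisors,
      (univ.filter (fun h : H => h ^ d = 1)).card ≤ c - 1 := by
    intro d hd
    rw [Nat.mem_properDivisors] at hd
    have hd0 : 0 < d := Nat.pos_of_dvd_of_pos hd.1 (Nat.pos_of_ne_zero he0)
    obtain ⟨g, hg⟩ := Monoid.exponent_min d hd0 hd.2
    have hne : (univ.filter (fun h : H => h ^ d = 1)) ≠ univ := by
      intro h
      have := (Finset.mem_filter.mp (h ▸ Finset.mem_univ g)).2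
      exact hg this
    have hlt : (univ.filter (fun h : H => h ^ d = 1)).card < c :=
      Finset.card_lt_card (Finset.ssubset_univ_iff.mpr hne)
    omega
  set r : ℚ := ((c : ℚ) - 1) / c with hr
  have hc0Q : (0 : ℚ) < c := by exact_mod_cast hc0
  have hr0 : 0 ≤ r := by
    apply div_nonneg _ (le_of_lt hc0Q)
    have : (1 : ℚ) ≤ c := by exact_mod_cast hc0
    linarith
  have hr1 : r < 1 := by
    rw [div_lt_one hc0Q]; linarith
  obtain ⟨N, hN⟩ := exists_pow_lt_of_lt_one (x := ε / (D + 1)) (by positivity) hr1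
  refine ⟨N, fun n hn => ?_⟩
  -- counting
  have hcardPi : Nat.card (Fin n → H) = c ^ n := by
    simp [Nat.card_eq_fintype_card, hc]
  have hbad : (univ.filter (fun g : Fin n → H => ¬ orderOf g = e)).card ≤ D * (c - 1) ^ n := by
    have hsub : (univ.filter (fun g : Fin n → H => ¬ orderOf g = e)) ⊆
        e.properDivisors.biUnion (fun d => univ.filter (fun g : Fin n → H => g ^ d = 1)) := by
      intro g hg
      rw [Finset.mem_filter] at hg
      have hpow : g ^ e = 1 := by
        funext i
        simpa using Monoid.pow_exponent_eq_one (g i)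
      have hdvd : orderOf g ∣ e := orderOf_dvd_of_pow_eq_one hpow
      have hmem : orderOf g ∈ e.properDivisors := by
        rw [Nat.mem_properDivisors]
        exact ⟨hdvd, lt_of_le_of_ne (Nat.le_of_dvd (Nat.pos_of_ne_zero he0) hdvd) hg.2⟩
      exact Finset.mem_biUnion.mpr ⟨orderOf g, hmem,
        Finset.mem_filter.mpr ⟨Finset.mem_univ g, pow_orderOf_eq_one g⟩⟩
    calc (univ.filter (fun g : Fin n → H => ¬ orderOf g = e)).card
        ≤ (e.properDivisors.biUnion (fun d => univ.filter (fun g : Fin n → H => g ^ d = 1))).card :=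
          Finset.card_le_card hsub
      _ ≤ ∑ d ∈ e.properDivisors, (univ.filter (fun g : Fin n → H => g ^ d = 1)).card :=
          Finset.card_biUnion_le
      _ ≤ ∑ d ∈ e.properDivisors, (c - 1) ^ n := by
          apply Finset.sum_le_sum
          intro d hd
          -- product structure
          have hcard : (univ.filter (fun g : Fin n → H => g ^ d = 1)).card =
              (univ.filter (fun h : H => h ^ d = 1)).card ^ n := by
            rw [← Fintype.card_subtype, ← Fintype.card_subtype]
            have he1 : {g : Fin n → H // g ^ d = 1} ≃ (Fin n → {h : H // h ^ d = 1}) := by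
              refine Equiv.trans (Equiv.subtypeEquivRight ?_) Equiv.subtypePiEquivPi
              intro g
              constructor
              · intro h i; exact congrFun h i
              · intro h; funext i; exact h i
            rw [Fintype.card_congr he1, Fintype.card_fun, Fintype.card_fin]
          rw [hcard]
          exact Nat.pow_le_pow_left (hdiv d hd) n
      _ = D * (c - 1) ^ n := by rw [Finset.sum_const, smul_eq_mul]
  have hsplit : (univ.filter (fun g : Fin n → H => orderOf g = e)).card +
      (univ.filter (fun g : Fin n → H => ¬ orderOf g = e)).card = c ^ n := by
    rw [Finset.card_filter_add_card_filter_not]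
    simp [Fintype.card_fun, hc]
  -- now the rational estimate
  rw [rhoStar, hcardPi]
  have hgood : Nat.card {g : Fin n → H // orderOf g = e} =
      (univ.filter (fun g : Fin n → H => orderOf g = e)).card := by
    rw [Nat.card_eq_fintype_card, Fintype.card_subtype]
  rw [hgood]
  set G := (univ.filter (fun g : Fin n → H => orderOf g = e)).card with hG
  set B := (univ.filter (fun g : Fin n → H => ¬ orderOf g = e)).card with hB
  have hcn : (0:ℚ) < (c:ℚ) ^ n := by positivity
  rw [lt_div_iff₀ (by exact_mod_cast hcn)]
  have hGQ : (G : ℚ) = (c:ℚ) ^ n - B := by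
    have : (G : ℚ) + B = (c:ℚ)^n := by exact_mod_cast congrArg (Nat.cast : ℕ → ℚ) hsplit
    linarith
  have hBQ : (B : ℚ) ≤ D * ((c:ℚ) - 1) ^ n := by
    have h1 : ((c - 1 : ℕ) : ℚ) = (c:ℚ) - 1 := by
      have : (1:ℕ) ≤ c := hc0
      push_cast [this]; ring
    calc (B : ℚ) ≤ ((D * (c-1)^n : ℕ) : ℚ) := by exact_mod_cast hbad
      _ = D * ((c:ℚ) - 1) ^ n := by push_cast [h1]; ring
  -- key: D * (c-1)^n < ε * c^n
  have hkey : (D : ℚ) * ((c:ℚ) - 1) ^ n < ε * (c:ℚ) ^ n := by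
    have hrn : ((c:ℚ) - 1) ^ n = r ^ n * (c:ℚ) ^ n := by
      rw [hr, div_pow, div_mul_cancel₀]
      positivity
    have hrmono : r ^ n ≤ r ^ N := pow_le_pow_of_le_one hr0 (le_of_lt hr1) hn
    have h2 : (D : ℚ) * r ^ n ≤ (D + 1) * r ^ N := by
      have hD0 : (0:ℚ) ≤ D := by positivity
      have : (D:ℚ) * r ^ n ≤ (D:ℚ) * r ^ N := by
        apply mul_le_mul_of_nonneg_left hrmono hD0
      have h3 : (D:ℚ) * r ^ N ≤ (D + 1) * r ^ N := by
        apply mul_le_mul_of_nonneg_right _ (pow_nonneg hr0 N)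
        linarith
      linarith
    have h4 : ((D:ℚ) + 1) * r ^ N < ε := by
      have := hN
      rw [lt_div_iff₀ (by positivity)] at this
      linarith [this]
    calc (D : ℚ) * ((c:ℚ) - 1) ^ n = (D:ℚ) * r ^ n * (c:ℚ)^n := by rw [hrn]; ring
      _ ≤ ((D:ℚ) + 1) * r ^ N * (c:ℚ)^n := by
          apply mul_le_mul_of_nonneg_right h2 (le_of_lt hcn)
      _ < ε * (c:ℚ)^n := by
          apply mul_lt_mul_of_pos_right h4 hcn
    -- done
  have : (B : ℚ) < ε * (c:ℚ)^n := lt_of_le_of_lt hBQ hkey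
  rw [hGQ]
  have : (c:ℚ)^n = ((c:ℚ)^n : ℚ) := rfl
  push_cast
  nlinarith [hGQ, hBQ, hkey]
end

section
/- Let ε ∈ (0,1) and let k > 1 be an integer. Suppose there exists a finite non-soluble group H such that ρ_k(H) > ε. Then there exists a finite non-soluble group G such that ρ_k^*(G) > ε. -/
section aux

variable {k m : ℕ}

lemma aux_pow_eq_one (v : Fin m → Multiplicative (ZMod k)) : v ^ k = 1 := by
  funext i
  show (v i) ^ k = 1
  have h0 : k • (Multiplicative.toAdd (v i)) = 0 := by
    rw [nsmul_eq_mul, ZMod.natCast_self, zero_mul]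
  calc (v i) ^ k = (Multiplicative.ofAdd (Multiplicative.toAdd (v i))) ^ k := rfl
    _ = Multiplicative.ofAdd (k • Multiplicative.toAdd (v i)) := by rw [ofAdd_nsmul]
    _ = 1 := by rw [h0]; rfl

lemma aux_orderOf_eq (v : Fin m → Multiplicative (ZMod k)) (i : Fin m)
    (hi : v i = Multiplicative.ofAdd (1 : ZMod k)) : orderOf v = k := by
  have h1 : orderOf v ∣ k := orderOf_dvd_of_pow_eq_one (aux_pow_eq_one v)
  have h2 : k ∣ orderOf v := by
    have := orderOf_map_dvd (Pi.evalMonoidHom (fun _ => Multiplicative (ZMod k)) i) v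
    rw [Pi.evalMonoidHom_apply, hi] at this
    have ho : orderOf (Multiplicative.ofAdd (1 : ZMod k)) = k := by
      rw [orderOf_ofAdd_eq_addOrderOf, ZMod.addOrderOf_one]
    rwa [ho] at this
  exact Nat.dvd_antisymm h1 h2

lemma aux_card_bad [NeZero k] :
    Nat.card {v : Fin m → Multiplicative (ZMod k) //
      ∀ i, v i ≠ Multiplicative.ofAdd (1 : ZMod k)} = (k - 1) ^ m := by
  rw [Nat.card_congr (Equiv.subtypePiEquivPi
    (p := fun _ x => x ≠ Multiplicative.ofAdd (1 : ZMod k)))]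
  simp [Nat.card_eq_fintype_card, ZMod.card]

lemma aux_card_good [NeZero k] :
    k ^ m - (k - 1) ^ m
      ≤ Nat.card {v : Fin m → Multiplicative (ZMod k) // orderOf v = k} := by
  have hbad : Nat.card {v : Fin m → Multiplicative (ZMod k) // ¬ orderOf v = k}
      ≤ (k - 1) ^ m := by
    rw [← aux_card_bad (k := k) (m := m), Nat.card_eq_fintype_card, Nat.card_eq_fintype_card]
    exact Fintype.card_subtype_mono _ _
      (fun v hv i hi => hv (aux_orderOf_eq v i hi))
  have htot : Nat.card {v : Fin m → Multiplicative (ZMod k) // orderOf v = k}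
      + Nat.card {v : Fin m → Multiplicative (ZMod k) // ¬ orderOf v = k} = k ^ m := by
    rw [Nat.card_eq_fintype_card, Nat.card_eq_fintype_card,
      Fintype.card_subtype_compl (fun v : Fin m → Multiplicative (ZMod k) => orderOf v = k)]
    have hle : Fintype.card {v : Fin m → Multiplicative (ZMod k) // orderOf v = k}
        ≤ Fintype.card (Fin m → Multiplicative (ZMod k)) := Fintype.card_subtype_le _
    have hcV : Fintype.card (Fin m → Multiplicative (ZMod k)) = k ^ m := by simp [ZMod.card]
    omega
  omega

end aux

/-- Let `ε ∈ (0,1)` and `k > 1`. If there is a finite non-soluble group `H` with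
`ρ_k(H) > ε`, then there is a finite non-soluble group `G` with `ρ_k^*(G) > ε`. -/
theorem exists_nonsolvable_rhoStar_gt_of_rho_gt (ε : ℚ) (hε0 : 0 < ε) (hε1 : ε < 1)
    (k : ℕ) (hk : 1 < k)
    (hH : ∃ (H : Type) (_ : Group H) (_ : Fintype H), ¬ IsSolvable H ∧ ε < rho H k) :
    ∃ (G : Type) (_ : Group G) (_ : Fintype G), ¬ IsSolvable G ∧ ε < rhoStar G k := by
  obtain ⟨H, _, _, hns, hrho⟩ := hH
  haveI : NeZero k := ⟨by omega⟩
  have hk0 : (0 : ℚ) < (k : ℚ) := by exact_mod_cast (by omega : 0 < k)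
  have hk1 : ((k - 1 : ℕ) : ℚ) = (k : ℚ) - 1 := by
    push_cast [Nat.cast_sub (by omega : 1 ≤ k)]; ring
  -- choose m with ((k-1)/k)^m < rho H k - ε
  have hr1 : ((k - 1 : ℕ) : ℚ) / (k : ℚ) < 1 := by
    rw [div_lt_one hk0, hk1]; linarith
  obtain ⟨m, hm⟩ := exists_pow_lt_of_lt_one (sub_pos.mpr hrho) hr1
  refine ⟨H × (Fin m → Multiplicative (ZMod k)), inferInstance, inferInstance, ?_, ?_⟩
  · intro hs
    exact hns (@solvable_of_surjective _ _ _ _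
      (MonoidHom.fst H (Fin m → Multiplicative (ZMod k))) Prod.fst_surjective hs)
  have hcardV : Nat.card (Fin m → Multiplicative (ZMod k)) = k ^ m := by
    simp [Nat.card_eq_fintype_card, ZMod.card]
  -- injection into elements of order k
  have hinj : Nat.card {h : H // h ^ k = 1}
        * Nat.card {v : Fin m → Multiplicative (ZMod k) // orderOf v = k}
      ≤ Nat.card {p : H × (Fin m → Multiplicative (ZMod k)) // orderOf p = k} := by
    rw [← Nat.card_prod]
    apply Nat.card_le_card_of_injective
      (f := fun x : {h : H // h ^ k = 1}
          × {v : Fin m → Multiplicative (ZMod k) // orderOf v = k} =>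
        (⟨(x.1.1, x.2.1), by
          rw [Prod.orderOf_mk, x.2.2]
          exact Nat.dvd_antisymm
            (Nat.lcm_dvd (orderOf_dvd_of_pow_eq_one x.1.2) dvd_rfl)
            (Nat.dvd_lcm_right _ _)⟩ :
          {p : H × (Fin m → Multiplicative (ZMod k)) // orderOf p = k}))
    · intro a b hab
      simp only [Subtype.mk.injEq, Prod.mk.injEq] at hab
      exact Prod.ext (Subtype.ext hab.1) (Subtype.ext hab.2)
  have hVcount := aux_card_good (k := k) (m := m)
  -- rational arithmetic
  have hcardH : (0 : ℚ) < (Nat.card H : ℚ) := by exact_mod_cast Nat.card_pos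
  set A := Nat.card {h : H // h ^ k = 1} with hA
  have hAle : (A : ℚ) / (Nat.card H : ℚ) ≤ 1 := by
    rw [div_le_one hcardH]
    exact_mod_cast Nat.card_le_card_of_injective _ Subtype.val_injective
  have hkm0 : (0 : ℚ) < ((k : ℚ)) ^ m := pow_pos hk0 m
  rw [rhoStar]
  have hcardG : (Nat.card (H × (Fin m → Multiplicative (ZMod k))) : ℚ)
      = (Nat.card H : ℚ) * (k : ℚ) ^ m := by
    rw [Nat.card_prod, hcardV]; push_cast; ring
  rw [hcardG]
  have hpowle : (k - 1) ^ m ≤ k ^ m := Nat.pow_le_pow_left (by omega) m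
  have key : (A : ℚ) * ((k : ℚ) ^ m - ((k : ℚ) - 1) ^ m)
      ≤ (Nat.card {p : H × (Fin m → Multiplicative (ZMod k)) // orderOf p = k} : ℚ) := by
    have h1 : (A * (k ^ m - (k - 1) ^ m) : ℕ)
        ≤ Nat.card {p : H × (Fin m → Multiplicative (ZMod k)) // orderOf p = k} :=
      le_trans (Nat.mul_le_mul_left A hVcount) hinj
    have h2 : ((A * (k ^ m - (k - 1) ^ m) : ℕ) : ℚ)
        = (A : ℚ) * ((k : ℚ) ^ m - ((k : ℚ) - 1) ^ m) := by
      rw [Nat.cast_mul, Nat.cast_sub hpowle, Nat.cast_pow, Nat.cast_pow, hk1]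
    rw [← h2]
    exact_mod_cast h1
  have crux : ε < (A : ℚ) * ((k : ℚ) ^ m - ((k : ℚ) - 1) ^ m)
      / ((Nat.card H : ℚ) * (k : ℚ) ^ m) := by
    have expand : (A : ℚ) * ((k : ℚ) ^ m - ((k : ℚ) - 1) ^ m)
        / ((Nat.card H : ℚ) * (k : ℚ) ^ m)
        = (A : ℚ) / (Nat.card H : ℚ) * (1 - (((k : ℚ) - 1) / (k : ℚ)) ^ m) := by
      field_simp
      rw [div_pow, mul_assoc, mul_one_sub, mul_div_assoc', mul_div_cancel_left₀ _ (pow_ne_zero m hk0.ne')]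
    rw [expand]
    have hrm : (((k : ℚ) - 1) / (k : ℚ)) ^ m < (A : ℚ) / (Nat.card H : ℚ) - ε := by
      rw [hk1] at hm
      have hrr : rho H k = (A : ℚ) / (Nat.card H : ℚ) := rfl
      rwa [hrr] at hm
    have hk1' : (1 : ℚ) < (k : ℚ) := by exact_mod_cast hk
    have hrm0 : (0 : ℚ) ≤ (((k : ℚ) - 1) / (k : ℚ)) ^ m :=
      pow_nonneg (div_nonneg (by linarith) hk0.le) m
    have hq : ε < (A : ℚ) / (Nat.card H : ℚ) := by
      have hrr : rho H k = (A : ℚ) / (Nat.card H : ℚ) := rfl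
      rwa [hrr] at hrho
    nlinarith
  calc ε < (A : ℚ) * ((k : ℚ) ^ m - ((k : ℚ) - 1) ^ m)
      / ((Nat.card H : ℚ) * (k : ℚ) ^ m) := crux
    _ ≤ (Nat.card {p : H × (Fin m → Multiplicative (ZMod k)) // orderOf p = k} : ℚ)
      / ((Nat.card H : ℚ) * (k : ℚ) ^ m) := by gcongr
end

section
/- Let k be a positive integer, ε ∈ (0,1), and let G be a finite non-soluble group with ρ_k(G) > ε. Then there exist normal subgroups N ⊴ G and S ⊴ G with N ≤ S such that: ρ_k(G/N) ≥ ρ_k(G) > ε; the quotient G/N is non-soluble and S/N is its unique minimal normal subgroup (i.e. S/N is a nontrivial normal subgroup of G/N contained in every nontrivial normal subgroup of G/N); and G/S is soluble with ρ_k(G/S) > ε. -/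
open Subgroup QuotientGroup

lemma isSolvable_of_mulEquiv' {G H : Type*} [Group G] [Group H] (e : G ≃* H)
    (h : IsSolvable G) : IsSolvable H := by
  haveI : Group.IsSolvable G := h
  exact solvable_of_solvable_injective (f := e.symm.toMonoidHom) e.symm.injective

/-- Passing to a quotient does not decrease `ρ_k`. -/
lemma rho_le_rho_quotient (G : Type) [Group G] [Fintype G] (N : Subgroup G) [N.Normal]
    (k : ℕ) : rho G k ≤ rho (G ⧸ N) k := by
  classical
  have hcard : Nat.card G = Nat.card (G ⧸ N) * Nat.card N :=
    Subgroup.card_eq_card_quotient_mul_card_subgroup N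
  have hinj : Nat.card {g : G // g ^ k = 1} ≤ Nat.card {y : G ⧸ N // y ^ k = 1} * Nat.card N := by
    have hf : Function.Injective (fun x : {g : G // g ^ k = 1} =>
        ((⟨(QuotientGroup.mk' N) x.1, by rw [← map_pow, x.2, map_one]⟩ :
            {y : G ⧸ N // y ^ k = 1}),
         (⟨x.1 * (((QuotientGroup.mk' N) x.1).out)⁻¹, by
            have : ((x.1 * (((QuotientGroup.mk' N) x.1).out)⁻¹ : G) : G ⧸ N) = 1 := by
              rw [QuotientGroup.mk_mul, QuotientGroup.mk_inv, QuotientGroup.out_eq']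
              exact mul_inv_cancel _
            exact (QuotientGroup.eq_one_iff _).1 this⟩ : N))) := by
      intro x y hxy
      have h1 : (QuotientGroup.mk' N) x.1 = (QuotientGroup.mk' N) y.1 := by
        simpa using congrArg (fun p => (p.1 : {y : G ⧸ N // y ^ k = 1}).1) hxy
      have h2 : x.1 * (((QuotientGroup.mk' N) x.1).out)⁻¹
          = y.1 * (((QuotientGroup.mk' N) y.1).out)⁻¹ := by
        simpa using congrArg (fun p => ((p.2 : N) : G)) hxy
      rw [h1] at h2
      exact Subtype.ext (mul_right_cancel h2)
    calc Nat.card {g : G // g ^ k = 1}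
        ≤ Nat.card ({y : G ⧸ N // y ^ k = 1} × N) := Nat.card_le_card_of_injective _ hf
      _ = Nat.card {y : G ⧸ N // y ^ k = 1} * Nat.card N := Nat.card_prod _ _
  have hq : (0 : ℚ) < (Nat.card (G ⧸ N) : ℚ) := by
    exact_mod_cast Nat.card_pos
  have hn : (0 : ℚ) < (Nat.card N : ℚ) := by
    exact_mod_cast Nat.card_pos
  rw [rho, rho, hcard]
  push_cast
  rw [div_le_div_iff₀ (mul_pos hq hn) hq]
  have : (Nat.card {g : G // g ^ k = 1} : ℚ)
      ≤ (Nat.card {y : G ⧸ N // y ^ k = 1} : ℚ) * (Nat.card N : ℚ) := by exact_mod_cast hinj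
  nlinarith [hq, hn, this]

lemma solvable_quotient_inf {Q : Type*} [Group Q] (A B : Subgroup Q) [A.Normal] [B.Normal]
    (hA : IsSolvable (Q ⧸ A)) (hB : IsSolvable (Q ⧸ B)) : IsSolvable (Q ⧸ (A ⊓ B)) := by
  haveI : Group.IsSolvable (Q ⧸ A) := hA; haveI : Group.IsSolvable (Q ⧸ B) := hB
  haveI : (A ⊓ B).Normal := by
    constructor
    intro x hx g
    rw [Subgroup.mem_inf] at hx ⊢
    exact ⟨‹A.Normal›.conj_mem x hx.1 g, ‹B.Normal›.conj_mem x hx.2 g⟩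
  let f : Q →* (Q ⧸ A) × (Q ⧸ B) := (QuotientGroup.mk' A).prod (QuotientGroup.mk' B)
  have hker : f.ker = A ⊓ B := by
    rw [MonoidHom.ker_prod, QuotientGroup.ker_mk', QuotientGroup.ker_mk']
  have hsol : IsSolvable (Q ⧸ f.ker) :=
    solvable_of_solvable_injective (QuotientGroup.kerLift_injective f)
  exact isSolvable_of_mulEquiv' (QuotientGroup.quotientMulEquivOfEq hker) hsol

lemma solvable_finsetInf {Q : Type*} [Group Q] (s : Finset (Subgroup Q))
    (h : ∀ M ∈ s, ∃ hn : M.Normal, letI := hn; IsSolvable (Q ⧸ M)) :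
    ∃ hn : (s.inf id).Normal, letI := hn; IsSolvable (Q ⧸ s.inf id) := by
  classical
  induction s using Finset.induction_on with
  | empty =>
      simp only [Finset.inf_empty]
      refine ⟨inferInstance, ?_⟩
      haveI := QuotientGroup.subsingleton_quotient_top (G := Q)
      show Group.IsSolvable (Q ⧸ (⊤ : Subgroup Q))
      infer_instance
  | @insert a s ha ih =>
      obtain ⟨hn, hs⟩ := ih (fun M hM => h M (Finset.mem_insert_of_mem hM))
      obtain ⟨han, has⟩ := h a (Finset.mem_insert_self _ _)
      haveI := han; haveI := hn
      rw [Finset.inf_insert]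
      simp only [id]
      have hsol : IsSolvable (Q ⧸ (a ⊓ s.inf id)) := solvable_quotient_inf _ _ has hs
      haveI : (a ⊓ s.inf id).Normal := by
        constructor
        intro x hx g
        rw [Subgroup.mem_inf] at hx ⊢
        exact ⟨han.conj_mem x hx.1 g, hn.conj_mem x hx.2 g⟩
      exact ⟨‹_›, hsol⟩

/-- Reduction to monolithic groups: if `G` is finite non-soluble with `ρ_k(G) > ε`, then
there exist normal subgroups `N ≤ S` of `G` such that `ρ_k(G/N) ≥ ρ_k(G) > ε`, the quotient
`G/N` is non-soluble with unique minimal normal subgroup `S/N`, and `G/S` is soluble with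
`ρ_k(G/S) > ε`. -/
theorem monolithic_reduction (G : Type) [Group G] [Fintype G] (k : ℕ) (hk : 0 < k)
    (ε : ℚ) (hε0 : 0 < ε) (hε1 : ε < 1) (hG : ¬ IsSolvable G) (hρ : ε < rho G k) :
    ∃ (N S : Subgroup G) (_ : N.Normal) (_ : S.Normal), N ≤ S ∧
      rho G k ≤ rho (G ⧸ N) k ∧
      ¬ IsSolvable (G ⧸ N) ∧
      (Subgroup.map (QuotientGroup.mk' N) S ≠ ⊥ ∧
        (Subgroup.map (QuotientGroup.mk' N) S).Normal ∧
        ∀ M : Subgroup (G ⧸ N), M.Normal → M ≠ ⊥ →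
          Subgroup.map (QuotientGroup.mk' N) S ≤ M) ∧
      IsSolvable (G ⧸ S) ∧ ε < rho (G ⧸ S) k := by
  classical
  -- choose a maximal normal subgroup with non-soluble quotient
  set 𝒮 : Set (Subgroup G) :=
    {N | ∃ h : N.Normal, ¬ (letI := h; IsSolvable (G ⧸ N))} with h𝒮
  have hbot : (⊥ : Subgroup G) ∈ 𝒮 := by
    refine ⟨inferInstance, fun h => hG ?_⟩
    exact isSolvable_of_mulEquiv' (QuotientGroup.quotientBot (G := G)) h
  obtain ⟨N, hN𝒮, hmax⟩ := Set.Finite.exists_maximalFor id 𝒮 (Set.toFinite 𝒮) ⟨⊥, hbot⟩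
  obtain ⟨hNnormal, hNns⟩ := hN𝒮
  haveI := hNnormal
  have hNns : ¬ IsSolvable (G ⧸ N) := hNns
  -- every nontrivial normal subgroup of G/N has soluble quotient
  have key : ∀ M : Subgroup (G ⧸ N), ∀ hM : M.Normal, M ≠ ⊥ →
      (letI := hM; IsSolvable ((G ⧸ N) ⧸ M)) := by
    intro M hM hMbot
    haveI := hM
    set M' := M.comap (QuotientGroup.mk' N) with hM'
    haveI : M'.Normal := hM.comap _
    have hNM' : N ≤ M' := by
      intro x hx
      show (QuotientGroup.mk' N) x ∈ M
      have : (QuotientGroup.mk' N) x = 1 := (QuotientGroup.eq_one_iff x).2 hx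
      rw [this]; exact M.one_mem
    have hmap : M'.map (QuotientGroup.mk' N) = M :=
      Subgroup.map_comap_eq_self_of_surjective (QuotientGroup.mk'_surjective N) M
    by_cases hs : IsSolvable (G ⧸ M')
    · have e := QuotientGroup.quotientQuotientEquivQuotient N M' hNM'
      exact isSolvable_of_mulEquiv'
        ((QuotientGroup.quotientMulEquivOfEq hmap.symm).trans e).symm hs
    · exfalso
      have hmem : M' ∈ 𝒮 := ⟨inferInstance, hs⟩
      have heq : N = M' := le_antisymm hNM' (hmax hmem hNM')
      apply hMbot
      rw [← hmap, ← heq]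
      exact (Subgroup.map_eq_bot_iff N).2 (le_of_eq (QuotientGroup.ker_mk' N).symm)
  -- the monolith
  set T : Set (Subgroup (G ⧸ N)) := {M | M.Normal ∧ M ≠ ⊥} with hT
  set R : Subgroup (G ⧸ N) := sInf T with hRdef
  haveI hRnormal : R.Normal := by
    constructor
    intro x hx g
    rw [hRdef, Subgroup.mem_sInf] at hx ⊢
    intro M hM
    exact hM.1.conj_mem x (hx M hM) g
  have hRbot : R ≠ ⊥ := by
    intro hR
    have hTfin : T.Finite := Set.toFinite _
    obtain ⟨hninf, hsol⟩ := solvable_finsetInf hTfin.toFinset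
      (fun M hM => by
        have hMT : M ∈ T := hTfin.mem_toFinset.1 hM
        exact ⟨hMT.1, key M hMT.1 hMT.2⟩)
    have hinf : hTfin.toFinset.inf id = R := by
      rw [Finset.inf_id_eq_sInf, Set.Finite.coe_toFinset, hRdef]
    haveI := hninf
    have hsol' : IsSolvable ((G ⧸ N) ⧸ R) := by
      have hRB : hTfin.toFinset.inf id = R := hinf
      exact isSolvable_of_mulEquiv' (QuotientGroup.quotientMulEquivOfEq hRB) hsol
    have hsol'' : IsSolvable ((G ⧸ N) ⧸ (⊥ : Subgroup (G ⧸ N))) :=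
      isSolvable_of_mulEquiv' (QuotientGroup.quotientMulEquivOfEq hR) hsol'
    exact hNns (isSolvable_of_mulEquiv' (QuotientGroup.quotientBot (G := G ⧸ N)) hsol'')
  have hRsol : IsSolvable ((G ⧸ N) ⧸ R) := key R hRnormal hRbot
  -- pull back the monolith
  set S : Subgroup G := R.comap (QuotientGroup.mk' N) with hSdef
  haveI hSnormal : S.Normal := hRnormal.comap _
  have hNS : N ≤ S := by
    intro x hx
    show (QuotientGroup.mk' N) x ∈ R
    have : (QuotientGroup.mk' N) x = 1 := (QuotientGroup.eq_one_iff x).2 hx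
    rw [this]; exact R.one_mem
  have hmapS : S.map (QuotientGroup.mk' N) = R :=
    Subgroup.map_comap_eq_self_of_surjective (QuotientGroup.mk'_surjective N) R
  have hGS : IsSolvable (G ⧸ S) := by
    have e := QuotientGroup.quotientQuotientEquivQuotient N S hNS
    exact isSolvable_of_mulEquiv'
      ((QuotientGroup.quotientMulEquivOfEq hmapS.symm).trans e) hRsol
  refine ⟨N, S, hNnormal, hSnormal, hNS, rho_le_rho_quotient G N k, hNns,
    ⟨?_, ?_, ?_⟩, hGS, ?_⟩
  · rw [hmapS]; exact hRbot
  · rw [hmapS]; exact hRnormal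
  · intro M hM hMbot
    rw [hmapS]
    exact sInf_le ⟨hM, hMbot⟩
  · exact lt_of_lt_of_le hρ (rho_le_rho_quotient G S k)
end

section
/- For every integer k ≥ 5, the symmetric group S_k on k points satisfies ρ_k^*(S_k) ≥ 1/k. Moreover, if k ≥ 5 is odd, then the alternating group A_k satisfies ρ_k(A_k) ≥ 2/k + 2/k!. -/
open Equiv Equiv.Perm

private lemma finRotate_pow_zero {k : ℕ} (m : ℕ) (h : m < k + 2) :
    ((finRotate (k + 2)) ^ m) 0 = ⟨m, h⟩ := by
  induction m with
  | zero => rfl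
  | succ n ih =>
    rw [pow_succ', Perm.mul_apply, ih (by omega), finRotate_succ_apply]
    ext
    simp [Fin.add_def, Nat.mod_eq_of_lt h]

section main

variable (n : ℕ)

private noncomputable def bb (σ : Perm (Fin (n + 1))) : Perm (Fin (n + 2)) :=
  Equiv.Perm.decomposeFin.symm (0, σ)

private lemma bb_zero (σ : Perm (Fin (n + 1))) : bb n σ 0 = 0 :=
  Equiv.Perm.decomposeFin_symm_apply_zero 0 σ

private noncomputable def FF (σ : Perm (Fin (n + 1))) : Perm (Fin (n + 2)) :=
  bb n σ * finRotate (n + 2) * (bb n σ)⁻¹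

private lemma orderOf_finRotate' : orderOf (finRotate (n + 2)) = n + 2 := by
  rw [Equiv.Perm.IsCycle.orderOf isCycle_finRotate, support_finRotate]
  simp

private lemma orderOf_FF (σ : Perm (Fin (n + 1))) : orderOf (FF n σ) = n + 2 := by
  have := orderOf_injective (MulAut.conj (bb n σ)).toMonoidHom
    (MulAut.conj (bb n σ)).injective (finRotate (n + 2))
  simpa [FF, orderOf_finRotate' n] using this

private lemma FF_pow_zero (σ : Perm (Fin (n + 1))) (m : ℕ) (h : m < n + 2) :
    ((FF n σ) ^ m) 0 = bb n σ ⟨m, h⟩ := by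
  have h1 : (FF n σ) ^ m = bb n σ * (finRotate (n + 2)) ^ m * (bb n σ)⁻¹ := by
    simp [FF, conj_pow]
  have h2 : (bb n σ)⁻¹ 0 = 0 := by
    rw [Perm.inv_eq_iff_eq]; exact (bb_zero n σ).symm
  rw [h1, Perm.mul_apply, Perm.mul_apply, h2, finRotate_pow_zero m h]

private lemma FF_injective : Function.Injective (FF n) := by
  intro σ τ hst
  have hb : bb n σ = bb n τ := by
    ext x
    have := FF_pow_zero n σ x.1 x.2
    rw [hst, FF_pow_zero n τ x.1 x.2] at this
    rw [show (⟨x.1, x.2⟩ : Fin (n + 2)) = x from rfl] at this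
    exact congrArg Fin.val this.symm
  have := Equiv.Perm.decomposeFin.symm.injective (a₁ := (0, σ)) (a₂ := (0, τ)) hb
  exact (Prod.mk.injEq _ _ _ _ ▸ this).2

private lemma sign_FF (σ : Perm (Fin (n + 1))) : Perm.sign (FF n σ) = (-1) ^ (n + 1) := by
  simp only [FF, map_mul, map_inv, sign_finRotate]
  rcases Int.units_eq_one_or (Perm.sign (bb n σ)) with h | h <;> rw [h] <;> simp

end main

/-- For `k ≥ 5`, `ρ_k^*(S_k) ≥ 1/k`; and if moreover `k` is odd,
`ρ_k(A_k) ≥ 2/k + 2/k!`. -/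
theorem rhoStar_symm_ge (k : ℕ) (hk : 5 ≤ k) :
    1 / (k : ℚ) ≤ rhoStar (Equiv.Perm (Fin k)) k ∧
    (Odd k → 2 / (k : ℚ) + 2 / (Nat.factorial k : ℚ) ≤ rho (alternatingGroup (Fin k)) k) := by
  obtain ⟨n, rfl⟩ : ∃ n, k = n + 2 := ⟨k - 2, by omega⟩
  set k := n + 2
  have hcardS : Nat.card (Equiv.Perm (Fin k)) = k.factorial := by
    rw [Nat.card_eq_fintype_card, Fintype.card_perm, Fintype.card_fin]
  have hfac : (k : ℚ) * (n + 1).factorial = k.factorial := by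
    rw [show k.factorial = k * (n+1).factorial from rfl]
    push_cast; ring
  have hkpos : (0 : ℚ) < k := by positivity
  have hfpos : (0 : ℚ) < (k.factorial : ℚ) := by positivity
  constructor
  · -- symmetric group part
    have hNle : (n + 1).factorial ≤ Nat.card {g : Equiv.Perm (Fin k) // orderOf g = k} := by
      have : Nat.card (Equiv.Perm (Fin (n + 1))) = (n + 1).factorial := by
        rw [Nat.card_eq_fintype_card, Fintype.card_perm, Fintype.card_fin]
      rw [← this]
      exact Nat.card_le_card_of_injective
        (fun σ => ⟨FF n σ, orderOf_FF n σ⟩)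
        (fun σ τ h => FF_injective n (by simpa using congrArg Subtype.val h))
    rw [rhoStar, hcardS, div_le_div_iff₀ hkpos hfpos, one_mul, ← hfac]
    have : ((n + 1).factorial : ℚ) ≤ (Nat.card {g : Equiv.Perm (Fin k) // orderOf g = k} : ℚ) := by
      exact_mod_cast hNle
    nlinarith
  · -- alternating group part
    intro hodd
    have hsign : ∀ σ : Perm (Fin (n + 1)), FF n σ ∈ alternatingGroup (Fin k) := by
      intro σ
      rw [Equiv.Perm.mem_alternatingGroup, sign_FF]
      obtain ⟨m, hm⟩ := hodd
      have : n + 1 = 2 * m := by omega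
      rw [this]
      simp [pow_mul]
    have hMle : (n + 1).factorial + 1 ≤
        Nat.card {g : alternatingGroup (Fin k) // g ^ k = 1} := by
      have hc : Nat.card (Option (Perm (Fin (n + 1)))) = (n + 1).factorial + 1 := by
        rw [Finite.card_option, Nat.card_eq_fintype_card, Fintype.card_perm, Fintype.card_fin]
      rw [← hc]
      refine Nat.card_le_card_of_injective
        (fun o => Option.casesOn o ⟨1, one_pow k⟩
          (fun σ => ⟨⟨FF n σ, hsign σ⟩, by
            have hp : (FF n σ) ^ k = 1 := by
              rw [show k = orderOf (FF n σ) from (orderOf_FF n σ).symm]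
              exact pow_orderOf_eq_one _
            exact Subtype.ext (by
              push_cast
              exact hp)⟩)) ?_
      rintro (_ | σ) (_ | τ) h
      · rfl
      · exfalso
        have h1 : (1 : Perm (Fin k)) = FF n τ := by
          have := congrArg (fun x => ((x.1 : alternatingGroup (Fin k)) : Perm (Fin k))) h
          simpa using this
        have h2 := orderOf_FF n τ
        rw [← h1, orderOf_one] at h2
        omega
      · exfalso
        have : FF n σ = (1 : Perm (Fin k)) := by
          have := congrArg (fun x => ((x.1 : alternatingGroup (Fin k)) : Perm (Fin k))) h
          simpa using this
        have h2 := orderOf_FF n σ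
        rw [this, orderOf_one] at h2
        omega
      · have : FF n σ = FF n τ := by
          have := congrArg (fun x => ((x.1 : alternatingGroup (Fin k)) : Perm (Fin k))) h
          simpa using this
        rw [FF_injective n this]
    have hcardA : 2 * (Nat.card (alternatingGroup (Fin k)) : ℚ) = (k.factorial : ℚ) := by
      have := two_mul_card_alternatingGroup (α := Fin k)
      rw [Nat.card_eq_fintype_card]
      rw [Fintype.card_perm, Fintype.card_fin] at this
      exact_mod_cast this
    have hApos : (0 : ℚ) < (Nat.card (alternatingGroup (Fin k)) : ℚ) := by
      have : (0:ℚ) < 2 * (Nat.card (alternatingGroup (Fin k)) : ℚ) := hcardA ▸ hfpos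
      linarith
    rw [rho]
    rw [div_add_div _ _ (ne_of_gt hkpos) (ne_of_gt hfpos), div_le_div_iff₀
      (by positivity) hApos]
    have hM : ((n + 1).factorial + 1 : ℚ) ≤
        (Nat.card {g : alternatingGroup (Fin k) // g ^ k = 1} : ℚ) := by
      exact_mod_cast hMle
    have e1 : (2 * (k.factorial : ℚ) + (k : ℚ) * 2) * (Nat.card (alternatingGroup (Fin k)) : ℚ)
        = ((n + 1).factorial + 1 : ℚ) * ((k : ℚ) * (k.factorial : ℚ)) := by
      linear_combination ((k.factorial : ℚ) + (k : ℚ)) * hcardA - (k.factorial : ℚ) * hfac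
    calc (2 * (k.factorial : ℚ) + (k : ℚ) * 2) * (Nat.card (alternatingGroup (Fin k)) : ℚ)
        = ((n + 1).factorial + 1 : ℚ) * ((k : ℚ) * (k.factorial : ℚ)) := e1
      _ ≤ _ := mul_le_mul_of_nonneg_right hM (by positivity)
end

section
/- Let p be an odd prime, a a positive integer, and q = p^a. Then the exponent of the projective special linear group PSL₂(F_q) (the quotient of SL(2, F_q) by its center, where F_q is the finite field with q elements) equals p(q+1)(q−1)/4. -/
open Matrix

variable {R : Type*} [CommRing R]

lemma aux_sq (s : Matrix (Fin 2) (Fin 2) R) :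
    s ^ 2 = (Matrix.trace s) • s - (s.det) • 1 := by
  ext i j
  rw [pow_two]
  fin_cases i <;> fin_cases j <;>
    simp [Matrix.mul_apply, Matrix.det_fin_two, Matrix.trace_fin_two, Fin.sum_univ_two,
      Matrix.one_apply] <;> ring

lemma aux_pow_id (s : Matrix (Fin 2) (Fin 2) R) (l m : R)
    (h : s ^ 2 = (l + m) • s - (l * m) • 1) (k : ℕ) :
    (l - m) • s ^ k = (l ^ k - m ^ k) • s + (l * m ^ k - m * l ^ k) • 1 := by
  induction k with
  | zero => simp only [pow_zero, mul_one]; module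
  | succ n ih =>
    have h1 : (l - m) • s ^ (n + 1) = ((l - m) • s ^ n) * s := by
      rw [smul_mul_assoc, pow_succ]
    rw [h1, ih, add_mul, smul_mul_assoc, smul_mul_assoc, one_mul, ← pow_two, h]
    match_scalars <;> ring

lemma aux_unip (n : Matrix (Fin 2) (Fin 2) R) (h : n ^ 2 = 0) (k : ℕ) :
    (1 + n) ^ k = 1 + k • n := by
  induction k with
  | zero => simp
  | succ j ih =>
    rw [pow_succ, ih, add_mul, mul_add, mul_add, one_mul, mul_one, smul_mul_assoc, ← pow_two, h]
    rw [smul_zero, add_zero, succ_nsmul, one_mul]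
    abel

lemma aux_mapMatrix_inj {F K : Type*} [Semiring F] [Semiring K] (f : F →+* K)
    (hf : Function.Injective f) :
    Function.Injective (f.mapMatrix : Matrix (Fin 2) (Fin 2) F →+* Matrix (Fin 2) (Fin 2) K) := by
  intro A B h
  ext i j
  apply hf
  have := congr_fun (congr_fun (congrArg (fun M => (M : Matrix (Fin 2) (Fin 2) K)) h) i) j
  simpa [RingHom.mapMatrix_apply, Matrix.map_apply] using this

lemma key_upper (p : ℕ) (hp : p.Prime) (hodd : p ≠ 2) (a : ℕ) (ha : 0 < a)
    (F : Type) [Field F] [Fintype F] (hF : Fintype.card F = p ^ a) [CharP F p] (k : ℕ)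
    (hk : p ^ a = 2 * k + 1) (S : Matrix.SpecialLinearGroup (Fin 2) F) :
    ∃ d, (d = p ∨ d = k ∨ d = k + 1) ∧ ∃ c : F, c ^ 2 = 1 ∧
      ((S ^ d : Matrix.SpecialLinearGroup (Fin 2) F) : Matrix (Fin 2) (Fin 2) F) = c • 1 := by
  haveI := Fact.mk hp
  set K := AlgebraicClosure F with hK
  let f : F →+* K := algebraMap F K
  have hfinj : Function.Injective f := f.injective
  haveI : CharP K p := charP_of_injective_algebraMap hfinj p
  set τ : F := Matrix.trace (S : Matrix (Fin 2) (Fin 2) F) with hτdef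
  have hCH : (S : Matrix (Fin 2) (Fin 2) F) ^ 2 = τ • (S : Matrix (Fin 2) (Fin 2) F) - (1 : F) • 1 := by
    have := aux_sq (S : Matrix (Fin 2) (Fin 2) F)
    rwa [S.prop] at this
  -- root of the characteristic polynomial in K
  obtain ⟨l, hl⟩ : ∃ l : K, l ^ 2 - f τ * l + 1 = 0 := by
    obtain ⟨l, hl⟩ := IsAlgClosed.exists_root
      (Polynomial.X ^ 2 - Polynomial.C (f τ) * Polynomial.X + Polynomial.C 1)
      (by
        have h2 : (Polynomial.X ^ 2 - Polynomial.C (f τ) * Polynomial.X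
            + Polynomial.C 1 : Polynomial K).degree = 2 := by
          compute_degree!
        rw [h2]; exact (by decide))
    refine ⟨l, ?_⟩
    have := hl
    simpa [Polynomial.IsRoot, Polynomial.eval_pow] using this
  set m : K := f τ - l with hmdef
  have hlm : l * m = 1 := by rw [hmdef]; linear_combination -hl
  have hsum : l + m = f τ := by rw [hmdef]; ring
  set T : Matrix (Fin 2) (Fin 2) K := f.mapMatrix (S : Matrix (Fin 2) (Fin 2) F) with hTdef
  have hmap_smul : ∀ (c : F) (A : Matrix (Fin 2) (Fin 2) F),
      f.mapMatrix (c • A) = f c • f.mapMatrix A := by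
    intro c A
    ext i j
    simp [RingHom.mapMatrix_apply, Matrix.map_apply]
  have hT2 : T ^ 2 = (l + m) • T - (l * m) • 1 := by
    rw [hTdef, ← map_pow, hCH, map_sub, hmap_smul, hmap_smul, hsum, hlm]
    simp
  have conclude : ∀ (n : ℕ) (ε : K), ε * ε = 1 → T ^ n = ε • 1 →
      ∃ c : F, c ^ 2 = 1 ∧
        ((S ^ n : Matrix.SpecialLinearGroup (Fin 2) F) : Matrix (Fin 2) (Fin 2) F) = c • 1 := by
    intro n ε hε hTn
    rcases mul_self_eq_one_iff.mp hε with rfl | rfl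
    · refine ⟨1, by norm_num, ?_⟩
      apply aux_mapMatrix_inj f hfinj
      rw [Matrix.SpecialLinearGroup.coe_pow, map_pow, hmap_smul]
      simpa [hTdef] using hTn
    · refine ⟨-1, by norm_num, ?_⟩
      apply aux_mapMatrix_inj f hfinj
      rw [Matrix.SpecialLinearGroup.coe_pow, map_pow, hmap_smul]
      simpa [hTdef] using hTn
  by_cases hlem : l = m
  · -- repeated eigenvalue : ±1, order divides p
    have hll : l * l = 1 := by rw [← hlm, ← hlem]
    obtain ⟨σ, hσ1, hτσ⟩ : ∃ σ : F, (σ = 1 ∨ σ = -1) ∧ τ = 2 * σ := by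
      rcases mul_self_eq_one_iff.mp hll with h1 | h1
      · refine ⟨1, Or.inl rfl, hfinj ?_⟩
        rw [← hsum, ← hlem, h1, show (2 * 1 : F) = 1 + 1 from by norm_num, map_add,
          _root_.map_one]
      · refine ⟨-1, Or.inr rfl, hfinj ?_⟩
        rw [← hsum, ← hlem, h1, show (2 * -1 : F) = -(1 + 1) from by ring, map_neg, map_add,
          _root_.map_one]
        ring
    set N : Matrix (Fin 2) (Fin 2) F := σ • (S : Matrix (Fin 2) (Fin 2) F) - 1 with hNdef
    have hσσ : σ * σ = 1 := by rcases hσ1 with rfl | rfl <;> norm_num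
    have hσ2 : σ ^ 2 = 1 := by rw [pow_two]; exact hσσ
    have hN2 : N ^ 2 = 0 := by
      have hexp : N ^ 2 = (σ * σ) • ((S : Matrix (Fin 2) (Fin 2) F) ^ 2)
          - (2 * σ) • (S : Matrix (Fin 2) (Fin 2) F) + 1 := by
        rw [hNdef, pow_two, pow_two]
        simp only [sub_mul, mul_sub, smul_mul_assoc, mul_smul_comm, mul_one, one_mul, smul_smul]
        match_scalars <;> ring
      rw [hexp, hCH, ← hτσ]
      match_scalars <;>
      first
        | ring1
        | linear_combination (2 * σ : F) * hσ2
        | linear_combination (τ - 2 * σ : F) * hσ2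
        | linear_combination (-2 : F) * hσ2
        | linear_combination (-1 : F) * hσ2
        | linear_combination (σ : F) * hσ2
        | linear_combination (-σ : F) * hσ2
        | linear_combination (1 : F) * hσ2
        | linear_combination (2 : F) * hσ2
        | linear_combination (-(2 * σ) : F) * hσ2
        | linear_combination (τ : F) * hσ2
        | linear_combination (-τ : F) * hσ2
        | linear_combination (2 * σ - τ : F) * hσ2
    have hSrep : (S : Matrix (Fin 2) (Fin 2) F) = σ • (1 + N) := by
      rw [hNdef]
      match_scalars <;>
      first
        | ring1
        | linear_combination (2 * σ : F) * hσ2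
        | linear_combination (τ - 2 * σ : F) * hσ2
        | linear_combination (-2 : F) * hσ2
        | linear_combination (-1 : F) * hσ2
        | linear_combination (σ : F) * hσ2
        | linear_combination (-σ : F) * hσ2
        | linear_combination (1 : F) * hσ2
        | linear_combination (2 : F) * hσ2
        | linear_combination (-(2 * σ) : F) * hσ2
        | linear_combination (τ : F) * hσ2
        | linear_combination (-τ : F) * hσ2
        | linear_combination (2 * σ - τ : F) * hσ2
    have hpN : p • N = 0 := by
      ext i j
      simp [nsmul_eq_mul, CharP.cast_eq_zero F p]
    have hσp : σ ^ p = σ := by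
      rcases hσ1 with rfl | rfl
      · simp
      · exact Odd.neg_one_pow (hp.odd_of_ne_two hodd)
    refine ⟨p, Or.inl rfl, σ, by rw [pow_two]; exact hσσ, ?_⟩
    rw [Matrix.SpecialLinearGroup.coe_pow, hSrep, smul_pow, aux_unip N hN2, hpN, add_zero, hσp]
  · -- distinct eigenvalues
    have hq0 : p ^ a ≠ 0 := pow_ne_zero _ hp.pos.ne'
    have hqodd : Odd (p ^ a) := (hp.odd_of_ne_two hodd).pow
    have hfτq : (f τ) ^ (p ^ a) = f τ := by
      rw [← map_pow]
      congr 1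
      have := FiniteField.pow_card τ
      rwa [hF] at this
    have hdich : l ^ (p ^ a) = l ∨ l ^ (p ^ a) = m := by
      have e1 : (l ^ 2 - f τ * l + 1) ^ (p ^ a) = 0 := by rw [hl, zero_pow hq0]
      have e2 : (l ^ 2 - f τ * l + 1) ^ (p ^ a)
          = (l ^ (p ^ a)) ^ 2 - f τ * l ^ (p ^ a) + 1 := by
        have h3 : l ^ 2 - f τ * l + 1 = l ^ 2 + (-(f τ * l) + 1) := by ring
        rw [h3, add_pow_char_pow, add_pow_char_pow, hqodd.neg_pow, one_pow, mul_pow, hfτq,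
          ← pow_mul, ← pow_mul, mul_comm 2 (p ^ a)]
        ring
      have e3 : (l ^ (p ^ a) - l) * (l ^ (p ^ a) - m) = 0 := by
        rw [show (l ^ (p ^ a) - l) * (l ^ (p ^ a) - m)
            = (l ^ (p ^ a)) ^ 2 - (l + m) * l ^ (p ^ a) + l * m from by ring, hsum, hlm, ← e2, e1]
      rcases mul_eq_zero.mp e3 with h | h
      · exact Or.inl (sub_eq_zero.mp h)
      · exact Or.inr (sub_eq_zero.mp h)
    have step : ∀ (n : ℕ) (ε : K), l ^ n = ε → m ^ n = ε → T ^ n = ε • 1 := by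
      intro n ε h1 h2
      have hid := aux_pow_id T l m hT2 n
      rw [h1, h2, sub_self, zero_smul, zero_add,
        show l * ε - m * ε = ε * (l - m) from by ring] at hid
      have h4 : (l - m) • T ^ n = (l - m) • (ε • (1 : Matrix (Fin 2) (Fin 2) K)) := by
        rw [hid, smul_smul, mul_comm]
      exact smul_right_injective _ (sub_ne_zero.mpr hlem) h4
    have hl0 : l ≠ 0 := by
      intro h0
      rw [h0, zero_mul] at hlm
      exact zero_ne_one hlm
    have hminv : m = l⁻¹ := by
      apply eq_inv_of_mul_eq_one_left
      linear_combination hlm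
    rcases hdich with hfix | hswap
    · -- l ∈ F_q : order divides k
      have h2k : l ^ (2 * k) = 1 := by
        have : l ^ (2 * k) * l = l := by
          rw [← pow_succ]
          rw [show 2 * k + 1 = p ^ a from hk.symm, hfix]
        exact mul_right_cancel₀ hl0 (by rw [this, one_mul])
      set ε : K := l ^ k with hεdef
      have hε2 : ε * ε = 1 := by rw [hεdef, ← pow_add, ← two_mul, h2k]
      have hmk : m ^ k = ε := by
        rw [hminv, inv_pow, ← hεdef, inv_eq_of_mul_eq_one_right hε2]
      obtain ⟨c, hc1, hc2⟩ := conclude k ε hε2 (step k ε rfl hmk)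
      exact ⟨k, Or.inr (Or.inl rfl), c, hc1, hc2⟩
    · -- l has norm-1 : order divides k+1
      have hq1 : l ^ (2 * (k + 1)) = 1 := by
        have : l ^ (p ^ a + 1) = 1 := by rw [pow_succ, hswap, mul_comm, hlm]
        rw [show 2 * (k + 1) = p ^ a + 1 from by omega]
        exact this
      set ε : K := l ^ (k + 1) with hεdef
      have hε2 : ε * ε = 1 := by rw [hεdef, ← pow_add, ← two_mul, hq1]
      have hεpm : ε = 1 ∨ ε = -1 := mul_self_eq_one_iff.mp hε2
      have hmk : m ^ (k + 1) = ε := by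
        rw [← hswap, ← pow_mul, mul_comm (p ^ a) (k + 1), pow_mul, ← hεdef]
        rcases hεpm with h | h
        · rw [h, one_pow]
        · rw [h, hqodd.neg_one_pow]
      obtain ⟨c, hc1, hc2⟩ := conclude (k + 1) ε hε2 (step (k + 1) ε rfl hmk)
      exact ⟨k + 1, Or.inr (Or.inr rfl), c, hc1, hc2⟩

lemma aux_fixed_mem_range (F K : Type*) [Field F] [Fintype F] [Field K] [Algebra F K]
    (x : K) (hx : x ^ (Fintype.card F) = x) :
    ∃ t : F, algebraMap F K t = x := by
  classical
  set q := Fintype.card F with hq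
  set f := algebraMap F K with hf
  set P : Polynomial K := Polynomial.X ^ q - Polynomial.X with hP
  have hq1 : 1 < q := Fintype.one_lt_card
  have hP0 : P ≠ 0 := FiniteField.X_pow_card_sub_X_ne_zero K hq1
  have hdeg : P.natDegree = q := FiniteField.X_pow_card_sub_X_natDegree_eq K hq1
  have hsub : (Finset.univ.image f) ⊆ P.roots.toFinset := by
    intro y hy
    obtain ⟨t, -, rfl⟩ := Finset.mem_image.mp hy
    rw [Multiset.mem_toFinset, Polynomial.mem_roots']
    refine ⟨hP0, ?_⟩
    simp only [hP, Polynomial.IsRoot, Polynomial.eval_sub, Polynomial.eval_pow,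
      Polynomial.eval_X]
    rw [← map_pow, FiniteField.pow_card, sub_self]
  have hcard : q ≤ (Finset.univ.image f).card := by
    rw [Finset.card_image_of_injective _ (algebraMap F K).injective, Finset.card_univ]
  have hcard2 : P.roots.toFinset.card ≤ q := by
    calc P.roots.toFinset.card ≤ Multiset.card P.roots := Multiset.toFinset_card_le _
      _ ≤ P.natDegree := P.card_roots'
      _ = q := hdeg
  have heq : Finset.univ.image f = P.roots.toFinset :=
    Finset.eq_of_subset_of_card_le hsub (le_trans hcard2 hcard)
  have hxmem : x ∈ P.roots.toFinset := by
    rw [Multiset.mem_toFinset, Polynomial.mem_roots']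
    refine ⟨hP0, ?_⟩
    simp only [hP, Polynomial.IsRoot, Polynomial.eval_sub, Polynomial.eval_pow,
      Polynomial.eval_X]
    rw [hx, sub_self]
  rw [← heq] at hxmem
  obtain ⟨t, -, ht⟩ := Finset.mem_image.mp hxmem
  exact ⟨t, ht⟩

/-- Let `p` be an odd prime, `a ≥ 1`, and `F` the finite field with `q = p ^ a` elements.
Then the exponent of `PSL₂(F_q) = SL(2, F_q) / Z(SL(2, F_q))` equals `p(q+1)(q-1)/4`. -/
theorem exponent_PSL2 (p : ℕ) (hp : p.Prime) (hodd : p ≠ 2) (a : ℕ) (ha : 0 < a)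
    (F : Type) [Field F] [Fintype F] (hF : Fintype.card F = p ^ a) :
    Monoid.exponent (Matrix.SpecialLinearGroup (Fin 2) F ⧸
        Subgroup.center (Matrix.SpecialLinearGroup (Fin 2) F)) =
      p * (p ^ a + 1) * (p ^ a - 1) / 4 := by
  classical
  haveI := Fact.mk hp
  -- characteristic
  haveI hchar : CharP F p := by
    obtain ⟨n, hn, hcard⟩ := FiniteField.card F (ringChar F)
    have : p = ringChar F := by
      have hdvd : p ∣ ringChar F ^ (n : ℕ) := by
        rw [← hcard, hF]; exact dvd_pow_self p ha.ne'
      exact ((Nat.prime_dvd_prime_iff_eq hp hn).mp (hp.dvd_of_dvd_pow hdvd))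
    rw [this]; exact ringChar.charP F
  -- q = 2k+1
  obtain ⟨k, hk⟩ : Odd (p ^ a) := (hp.odd_of_ne_two hodd).pow
  have hk' : p ^ a = 2 * k + 1 := hk
  -- notation
  set G := Matrix.SpecialLinearGroup (Fin 2) F with hG
  set Z := Subgroup.center G with hZ
  set E := Monoid.exponent (G ⧸ Z) with hE
  have mk_pow : ∀ (S : G) (n : ℕ), ((S ^ n : G) : G ⧸ Z) = ((S : G ⧸ Z)) ^ n := by
    intro S n
    exact QuotientGroup.mk_pow Z S n
  -- scalar matrices are central
  have central : ∀ (S : G) (n : ℕ) (c : F), c ^ 2 = 1 →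
      ((S ^ n : G) : Matrix (Fin 2) (Fin 2) F) = c • 1 → S ^ n ∈ Z := by
    intro S n c hc hs
    rw [hZ, Matrix.SpecialLinearGroup.mem_center_iff]
    refine ⟨c, by simpa using hc, ?_⟩
    rw [Matrix.scalar_apply, ← Matrix.smul_one_eq_diagonal, hs]
  -- upper bound : E ∣ p * k * (k+1)
  have hupper : E ∣ p * (k * (k + 1)) := by
    apply Monoid.exponent_dvd_of_forall_pow_eq_one
    intro x
    obtain ⟨S, rfl⟩ := QuotientGroup.mk'_surjective Z x
    obtain ⟨d, hd, c, hc, hSd⟩ := key_upper p hp hodd a ha F hF k hk' S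
    have hddvd : d ∣ p * (k * (k + 1)) := by
      rcases hd with rfl | h | h
      · exact Dvd.intro _ rfl
      · exact ⟨p * (k + 1), by rw [h]; ring⟩
      · exact ⟨p * k, by rw [h]; ring⟩
    obtain ⟨t, ht⟩ := hddvd
    have hpow : S ^ (p * (k * (k + 1))) = (S ^ d) ^ t := by rw [← pow_mul, ← ht]
    have hcent : S ^ (p * (k * (k + 1))) ∈ Z := by
      rw [hpow, ← pow_mul]
      apply central S (d * t) (c ^ t) (by rw [← pow_mul, mul_comm t 2, pow_mul, hc, one_pow])
      rw [Matrix.SpecialLinearGroup.coe_pow, pow_mul, ← Matrix.SpecialLinearGroup.coe_pow, hSd,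
        smul_pow, one_pow]
    rw [QuotientGroup.mk'_apply, ← mk_pow]
    exact (QuotientGroup.eq_one_iff _).mpr hcent
  -- element of order p
  have hpE : p ∣ E := by
    set u : G := ⟨!![1, 1; 0, 1], by simp [Matrix.det_fin_two_of]⟩ with hu
    have hmat : (u : Matrix (Fin 2) (Fin 2) F) = 1 + !![0, 1; 0, 0] := by
      ext i j
      fin_cases i <;> fin_cases j <;> simp [hu, Matrix.one_apply]
    have hn2 : (!![0, 1; 0, 0] : Matrix (Fin 2) (Fin 2) F) ^ 2 = 0 := by
      ext i j
      fin_cases i <;> fin_cases j <;>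
        simp [pow_two, Matrix.mul_apply, Fin.sum_univ_two]
    have hup : u ^ p = 1 := by
      apply Subtype.ext
      rw [Matrix.SpecialLinearGroup.coe_pow, hmat, aux_unip _ hn2]
      have : p • (!![0, 1; 0, 0] : Matrix (Fin 2) (Fin 2) F) = 0 := by
        ext i j
        simp [nsmul_eq_mul, CharP.cast_eq_zero F p]
      rw [this, add_zero, Matrix.SpecialLinearGroup.coe_one]
    have hdvd : orderOf ((u : G ⧸ Z)) ∣ p := by
      apply orderOf_dvd_of_pow_eq_one
      rw [← mk_pow, hup]
      rfl
    have hne : ((u : G ⧸ Z)) ≠ 1 := by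
      intro h
      have humem : u ∈ Z := (QuotientGroup.eq_one_iff u).mp h
      rw [hZ, Matrix.SpecialLinearGroup.mem_center_iff] at humem
      obtain ⟨r, -, hr⟩ := humem
      have h01 := congr_fun (congr_fun (congrArg (fun M : Matrix (Fin 2) (Fin 2) F => M) hr) 0) 1
      rw [Matrix.scalar_apply] at h01
      simp [hu, Matrix.diagonal_apply] at h01
    have horder : orderOf ((u : G ⧸ Z)) = p := by
      rcases (Nat.Prime.eq_one_or_self_of_dvd hp _ hdvd) with h | h
      · exact absurd (orderOf_eq_one_iff.mp h) hne
      · exact h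
    rw [← horder]
    exact Monoid.order_dvd_exponent _
  -- element of order (q-1)/2 = k
  have hkE : k ∣ E := by
    obtain ⟨g, hg⟩ := IsCyclic.exists_generator (α := Fˣ)
    have horderg : orderOf g = 2 * k := by
      rw [orderOf_eq_card_of_forall_mem_zpowers hg, Nat.card_eq_fintype_card,
        Fintype.card_units, hF, hk']
      omega
    set w : G := ⟨Matrix.diagonal ![(g : F), ((g⁻¹ : Fˣ) : F)], by
      simp [Matrix.det_diagonal, Fin.prod_univ_two, ← Units.val_mul]⟩ with hw
    set m0 := orderOf ((w : G ⧸ Z)) with hm0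
    have hwm0 : w ^ m0 ∈ Z := by
      apply (QuotientGroup.eq_one_iff _).mp
      rw [mk_pow, pow_orderOf_eq_one]
    rw [hZ, Matrix.SpecialLinearGroup.mem_center_iff] at hwm0
    obtain ⟨r, -, hr⟩ := hwm0
    have hrmat : Matrix.scalar (Fin 2) r
        = (Matrix.diagonal ![(g : F), ((g⁻¹ : Fˣ) : F)]) ^ m0 := by
      rw [hr, Matrix.SpecialLinearGroup.coe_pow, hw]
    rw [Matrix.diagonal_pow, Matrix.scalar_apply] at hrmat
    have h00 := congr_fun (congr_fun hrmat 0) 0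
    have h11 := congr_fun (congr_fun hrmat 1) 1
    simp [Matrix.diagonal_apply] at h00 h11
    have hx0 : (g : F) ^ m0 ≠ 0 := pow_ne_zero _ (Units.ne_zero g)
    have hself : ((g : F) ^ m0) = ((g : F) ^ m0)⁻¹ := h00.symm.trans h11
    have hx1 : (g : F) ^ m0 * (g : F) ^ m0 = 1 := by
      calc (g : F) ^ m0 * (g : F) ^ m0 = (g : F) ^ m0 * ((g : F) ^ m0)⁻¹ := by
            exact congrArg _ hself
        _ = 1 := mul_inv_cancel₀ hx0
    have h2m0 : g ^ (2 * m0) = 1 := by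
      apply Units.ext
      push_cast
      rw [two_mul, pow_add]
      exact hx1
    have hdvd2 : 2 * k ∣ 2 * m0 := by
      rw [← horderg]
      exact orderOf_dvd_of_pow_eq_one h2m0
    have hkm0 : k ∣ m0 := Nat.dvd_of_mul_dvd_mul_left (by norm_num) hdvd2
    exact hkm0.trans (Monoid.order_dvd_exponent _)
  -- element of order (q+1)/2 = k+1
  have hk1E : (k + 1) ∣ E := by
    set K := AlgebraicClosure F with hK
    set f : F →+* K := algebraMap F K with hf
    haveI : CharP K p := charP_of_injective_algebraMap (algebraMap F K).injective p
    have hndvd : ¬ p ∣ 2 * (k + 1) := by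
      intro hdvd
      have hq : p ∣ p ^ a := dvd_pow_self p ha.ne'
      rw [hk'] at hq
      have h1 : p ∣ 1 := by
        have h2 := Nat.dvd_sub hdvd hq
        rwa [show 2 * (k + 1) - (2 * k + 1) = 1 from by omega] at h2
      exact hp.ne_one (Nat.dvd_one.mp h1)
    haveI : NeZero ((2 * (k + 1) : ℕ) : K) :=
      ⟨fun h => hndvd ((CharP.cast_eq_zero_iff K p _).mp h)⟩
    obtain ⟨ζ, hζ⟩ := HasEnoughRootsOfUnity.exists_primitiveRoot K (2 * (k + 1))
    have hζpow : ζ ^ (2 * (k + 1)) = 1 := hζ.pow_eq_one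
    have hq1' : p ^ a + 1 = 2 * (k + 1) := by omega
    have hlm' : ζ * ζ ^ (p ^ a) = 1 := by
      rw [← pow_succ', show p ^ a + 1 = 2 * (k + 1) from by omega, hζpow]
    have hfixed : (ζ + ζ ^ (p ^ a)) ^ (p ^ a) = ζ + ζ ^ (p ^ a) := by
      rw [add_pow_char_pow, ← pow_mul]
      have hqq : p ^ a * p ^ a = 2 * (k + 1) * (2 * k) + 1 := by rw [hk']; ring
      rw [hqq, pow_succ, pow_mul, hζpow, one_pow, one_mul, add_comm]
    obtain ⟨τ, hτ⟩ := aux_fixed_mem_range F K (ζ + ζ ^ (p ^ a)) (by rw [hF]; exact hfixed)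
    set C : G := ⟨!![0, -1; 1, τ], by simp [Matrix.det_fin_two_of]⟩ with hC
    have hCH2 : (C : Matrix (Fin 2) (Fin 2) F) ^ 2 = τ • (C : Matrix (Fin 2) (Fin 2) F)
        - (1 : F) • 1 := by
      have h1 := aux_sq (C : Matrix (Fin 2) (Fin 2) F)
      rw [C.prop] at h1
      rw [h1]
      congr 1
      rw [Matrix.trace_fin_two]
      simp [hC]
    have hmap_smul : ∀ (c : F) (A : Matrix (Fin 2) (Fin 2) F),
        f.mapMatrix (c • A) = f c • f.mapMatrix A := by
      intro c A
      ext i j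
      simp [RingHom.mapMatrix_apply, Matrix.map_apply]
    set T : Matrix (Fin 2) (Fin 2) K := f.mapMatrix (C : Matrix (Fin 2) (Fin 2) F) with hT
    have hT2 : T ^ 2 = (ζ + ζ ^ (p ^ a)) • T - (ζ * ζ ^ (p ^ a)) • 1 := by
      rw [hT, ← map_pow, hCH2, map_sub, hmap_smul, hmap_smul, hτ, hlm']
      simp
    set m0 := orderOf ((C : G ⧸ Z)) with hm0
    have hCm0 : C ^ m0 ∈ Z := by
      apply (QuotientGroup.eq_one_iff _).mp
      rw [mk_pow, pow_orderOf_eq_one]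
    rw [hZ, Matrix.SpecialLinearGroup.mem_center_iff] at hCm0
    obtain ⟨r, -, hr⟩ := hCm0
    have hTm0 : T ^ m0 = f r • 1 := by
      rw [hT, ← map_pow, ← Matrix.SpecialLinearGroup.coe_pow, ← hr, Matrix.scalar_apply,
        ← Matrix.smul_one_eq_diagonal, hmap_smul]
      simp
    have hid := aux_pow_id T ζ (ζ ^ (p ^ a)) hT2 m0
    rw [hTm0] at hid
    have h10 := congr_fun (congr_fun hid 1) 0
    have hT10 : T 1 0 = 1 := by
      rw [hT]
      simp [RingHom.mapMatrix_apply, Matrix.map_apply, hC]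
    simp [Matrix.smul_apply, Matrix.add_apply, Matrix.one_apply, hT10, smul_eq_mul] at h10
    have hζeq : ζ ^ m0 = (ζ ^ (p ^ a)) ^ m0 := sub_eq_zero.mp h10.symm
    have h2m0 : ζ ^ (2 * m0) = 1 := by
      calc ζ ^ (2 * m0) = ζ ^ m0 * ζ ^ m0 := by rw [two_mul, pow_add]
        _ = ζ ^ m0 * (ζ ^ (p ^ a)) ^ m0 := by rw [hζeq]
        _ = (ζ * ζ ^ (p ^ a)) ^ m0 := (mul_pow _ _ _).symm
        _ = 1 := by rw [hlm', one_pow]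
    have hdvd2 : 2 * (k + 1) ∣ 2 * m0 := hζ.dvd_of_pow_eq_one _ h2m0
    have hk1m0 : (k + 1) ∣ m0 := Nat.dvd_of_mul_dvd_mul_left (by norm_num) hdvd2
    exact hk1m0.trans (Monoid.order_dvd_exponent _)
  -- combine
  have cop1 : Nat.Coprime p k := by
    rw [hp.coprime_iff_not_dvd]
    intro hdk
    have hq : p ∣ 2 * k + 1 := by rw [← hk']; exact dvd_pow_self p ha.ne'
    have h1 : p ∣ 1 := by
      have h2 := Nat.dvd_sub hq (Dvd.dvd.mul_left hdk 2)
      rwa [show 2 * k + 1 - 2 * k = 1 from by omega] at h2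
    exact hp.ne_one (Nat.dvd_one.mp h1)
  have cop2 : Nat.Coprime p (k + 1) := by
    rw [hp.coprime_iff_not_dvd]
    intro hdk
    have hq : p ∣ 2 * k + 1 := by rw [← hk']; exact dvd_pow_self p ha.ne'
    have h1 : p ∣ 1 := by
      have h2 := Nat.dvd_sub (Dvd.dvd.mul_left hdk 2) hq
      rwa [show 2 * (k + 1) - (2 * k + 1) = 1 from by omega] at h2
    exact hp.ne_one (Nat.dvd_one.mp h1)
  have cop3 : Nat.Coprime k (k + 1) := by
    simpa using Nat.coprime_succ_self k
  have h12 : p * k ∣ E := Nat.Coprime.mul_dvd_of_dvd_of_dvd cop1 hpE hkE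
  have hlower : p * k * (k + 1) ∣ E :=
    Nat.Coprime.mul_dvd_of_dvd_of_dvd (cop2.mul cop3) h12 hk1E
  have hEeq : E = p * k * (k + 1) := by
    apply Nat.dvd_antisymm
    · rw [show p * k * (k + 1) = p * (k * (k + 1)) from by ring] at hlower ⊢
      exact hupper
    · exact hlower
  rw [hEeq, hk']
  rw [show 2 * k + 1 - 1 = 2 * k from by omega]
  rw [show p * (2 * k + 1 + 1) * (2 * k) = 4 * (p * k * (k + 1)) from by ring]
  rw [Nat.mul_div_cancel_left _ (by norm_num)]
end

section
/- Let G be a finite group, N a normal subgroup of G, and K a subgroup of G with N ∩ K = 1 and NK = G (so G = N ⋊ K). Let H be a subgroup of N normalised by K, and suppose that for every g ∈ G not lying in the subgroup HK, the intersection (HK) ∩ (HK)^g is contained in N. Then for every positive integer k, ρ_k(G) = ρ_k(HK) − (1/|K|)·ρ_k(H) + (1/|K|)·ρ_k(N). -/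
open Finset

lemma aux_mem_sup {G : Type} [Group G] (A B : Subgroup G)
    (hc : ∀ b ∈ B, ∀ a ∈ A, b * a * b⁻¹ ∈ A) (x : G) :
    x ∈ A ⊔ B ↔ ∃ a ∈ A, ∃ b ∈ B, x = a * b := by
  constructor
  · intro hx
    rw [Subgroup.sup_eq_closure_mul] at hx
    induction hx using Subgroup.closure_induction with
    | mem y hy =>
      obtain ⟨a, ha, b, hb, rfl⟩ := hy
      exact ⟨a, ha, b, hb, rfl⟩
    | one => exact ⟨1, one_mem _, 1, one_mem _, (one_mul 1).symm⟩
    | mul y z hy hz ihy ihz =>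
      obtain ⟨a, ha, b, hb, rfl⟩ := ihy
      obtain ⟨a', ha', b', hb', rfl⟩ := ihz
      refine ⟨a * (b * a' * b⁻¹), mul_mem ha (hc b hb a' ha'), b * b', mul_mem hb hb', ?_⟩
      group
    | inv y hy ihy =>
      obtain ⟨a, ha, b, hb, rfl⟩ := ihy
      refine ⟨b⁻¹ * a⁻¹ * b⁻¹⁻¹, hc b⁻¹ (inv_mem hb) a⁻¹ (inv_mem ha), b⁻¹, inv_mem hb, ?_⟩
      group
  · rintro ⟨a, ha, b, hb, rfl⟩
    exact mul_mem (le_sup_left (a := A) (b := B) ha) (le_sup_right (a := A) (b := B) hb)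

lemma aux_card_sup {G : Type} [Group G] [Fintype G] (A B : Subgroup G)
    (hc : ∀ b ∈ B, ∀ a ∈ A, b * a * b⁻¹ ∈ A) (htriv : A ⊓ B = ⊥) :
    Nat.card ↥(A ⊔ B) = Nat.card A * Nat.card B := by
  rw [← Nat.card_prod]
  apply Nat.card_congr
  refine Equiv.symm ?_
  refine Equiv.ofBijective (fun p : ↥A × ↥B => (⟨(p.1 : G) * (p.2 : G),
    mul_mem (le_sup_left (a := A) (b := B) p.1.2)
      (le_sup_right (a := A) (b := B) p.2.2)⟩ : ↥(A ⊔ B))) ⟨?_, ?_⟩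
  · rintro ⟨⟨a, ha⟩, ⟨b, hb⟩⟩ ⟨⟨a', ha'⟩, ⟨b', hb'⟩⟩ hEq
    simp only [Subtype.mk_eq_mk] at hEq
    have h2 : a'⁻¹ * a = b' * b⁻¹ := by
      calc a'⁻¹ * a = a'⁻¹ * (a * b) * b⁻¹ := by group
        _ = a'⁻¹ * (a' * b') * b⁻¹ := by rw [hEq]
        _ = b' * b⁻¹ := by group
    have key : a'⁻¹ * a ∈ A ⊓ B :=
      Subgroup.mem_inf.mpr ⟨mul_mem (inv_mem ha') ha, h2 ▸ mul_mem hb' (inv_mem hb)⟩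
    rw [htriv, Subgroup.mem_bot] at key
    have haa : a = a' := by
      have := congrArg (a' * ·) key
      simpa [mul_assoc] using this
    subst haa
    have hbb : b = b' := mul_left_cancel hEq
    simp [hbb]
  · rintro ⟨x, hx⟩
    obtain ⟨a, ha, b, hb, rfl⟩ := (aux_mem_sup A B hc x).1 hx
    exact ⟨⟨⟨a, ha⟩, ⟨b, hb⟩⟩, rfl⟩

/-- counting function -/
noncomputable def cnt (G : Type) [Fintype G] (p : G → Prop) : ℕ := Nat.card {x : G // p x}

section cntLemmas

variable {G : Type} [Fintype G]

lemma cnt_eq_card_filter (p : G → Prop) [DecidablePred p] :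
    cnt G p = #(univ.filter p) := by
  rw [cnt, Nat.card_eq_fintype_card, Fintype.card_subtype]

lemma cnt_congr {p q : G → Prop} (h : ∀ x, p x ↔ q x) : cnt G p = cnt G q := by
  have : p = q := funext fun x => propext (h x)
  rw [this]

lemma cnt_eq_zero {p : G → Prop} (h : ∀ x, ¬ p x) : cnt G p = 0 := by
  have : IsEmpty {x : G // p x} := ⟨fun a => h a.1 a.2⟩
  rw [cnt, Nat.card_of_isEmpty]

lemma cnt_split (p q : G → Prop) :
    cnt G p = cnt G (fun x => q x ∧ p x) + cnt G (fun x => ¬ q x ∧ p x) := by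
  classical
  rw [cnt_eq_card_filter, cnt_eq_card_filter, cnt_eq_card_filter]
  have h1 := Finset.card_filter_add_card_filter_not
    (s := univ.filter p) (p := fun x => q x)
  rw [Finset.filter_filter, Finset.filter_filter] at h1
  have e1 : (univ.filter fun x : G => p x ∧ q x) = univ.filter fun x : G => q x ∧ p x :=
    Finset.filter_congr fun x _ => by tauto
  have e2 : (univ.filter fun x : G => p x ∧ ¬ q x) = univ.filter fun x : G => ¬ q x ∧ p x :=
    Finset.filter_congr fun x _ => by tauto
  rw [e1, e2] at h1
  omega

lemma cnt_swap (P : G → Prop) (Q : G → G → Prop) :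
    (∑ g : G, cnt G (fun x => P x ∧ Q g x))
      = ∑ x : G, cnt G (fun g => P x ∧ Q g x) := by
  classical
  simp only [cnt_eq_card_filter, Finset.card_filter]
  rw [Finset.sum_comm]

lemma cnt_sum_const (P : G → Prop) (Q : G → G → Prop) (c : ℕ)
    (h : ∀ x, P x → cnt G (fun g => Q g x) = c) :
    (∑ x : G, cnt G (fun g => P x ∧ Q g x)) = cnt G P * c := by
  classical
  have hx : ∀ x : G, cnt G (fun g => P x ∧ Q g x) = if P x then c else 0 := by
    intro x
    by_cases hP : P x
    · rw [cnt_congr (q := fun g => Q g x) (fun g => by simp [hP]), h x hP, if_pos hP]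
    · rw [cnt_eq_zero (fun g hg => hP hg.1), if_neg hP]
  rw [Finset.sum_congr rfl fun x _ => hx x, ← Finset.sum_filter, Finset.sum_const,
    smul_eq_mul, ← cnt_eq_card_filter]

end cntLemmas

section cntGroup

variable {G : Type} [Group G] [Fintype G]

lemma cnt_mem (A : Subgroup G) : cnt G (fun x => x ∈ A) = Nat.card A := rfl

lemma cnt_root (A : Subgroup G) (k : ℕ) :
    Nat.card {g : ↥A // g ^ k = 1} = cnt G (fun x => x ∈ A ∧ x ^ k = 1) := by
  apply Nat.card_congr
  exact
    { toFun := fun g => ⟨(g.1 : G), g.1.2, by exact_mod_cast congrArg Subtype.val g.2⟩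
      invFun := fun x => ⟨⟨x.1, x.2.1⟩, by
        apply Subtype.ext
        push_cast
        exact x.2.2⟩
      left_inv := fun g => rfl
      right_inv := fun x => rfl }

lemma cnt_conj (P : G → Prop) (hP : ∀ g x : G, P x ↔ P (g * x * g⁻¹))
    (A : Subgroup G) (g : G) :
    cnt G (fun x => P x ∧ g * x * g⁻¹ ∈ A) = cnt G (fun y => P y ∧ y ∈ A) := by
  apply Nat.card_congr
  refine
    { toFun := fun x => ⟨g * x.1 * g⁻¹, (hP g x.1).1 x.2.1, x.2.2⟩
      invFun := fun y => ⟨g⁻¹ * y.1 * g, ?_, ?_⟩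
      left_inv := fun x => Subtype.ext (by show g⁻¹ * (g * x.1 * g⁻¹) * g = x.1; group)
      right_inv := fun y => Subtype.ext (by show g * (g⁻¹ * y.1 * g) * g⁻¹ = y.1; group) }
  · apply (hP g (g⁻¹ * y.1 * g)).2
    have hrw : g * (g⁻¹ * y.1 * g) * g⁻¹ = y.1 := by group
    rw [hrw]
    exact y.2.1
  · have hrw : g * (g⁻¹ * y.1 * g) * g⁻¹ = y.1 := by group
    rw [hrw]
    exact y.2.2

lemma cnt_coset (A : Subgroup G) (a : G) :
    cnt G (fun g => g * a ∈ A) = Nat.card A := by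
  apply Nat.card_congr
  exact
    { toFun := fun g => ⟨g.1 * a, g.2⟩
      invFun := fun y => ⟨y.1 * a⁻¹, by simpa using y.2⟩
      left_inv := fun g => Subtype.ext (by show g.1 * a * a⁻¹ = g.1; group)
      right_inv := fun y => Subtype.ext (by show y.1 * a⁻¹ * a = y.1; group) }

end cntGroup

set_option maxHeartbeats 1000000 in
/-- Let `G = N ⋊ K` be finite, `H ≤ N` a subgroup normalised by `K`, and suppose that
`(HK) ∩ (HK)^g ≤ N` for all `g ∉ HK`. Then for every `k > 0`,
`ρ_k(G) = ρ_k(HK) - ρ_k(H)/|K| + ρ_k(N)/|K|`. -/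
theorem rho_eq_of_semidirect (G : Type) [Group G] [Fintype G] (N K H : Subgroup G)
    (hN : N.Normal) (hNK₁ : N ⊓ K = ⊥) (hNK₂ : N ⊔ K = ⊤)
    (hHN : H ≤ N)
    (hHK : ∀ g ∈ K, ∀ h ∈ H, g * h * g⁻¹ ∈ H)
    (hint : ∀ g : G, g ∉ H ⊔ K →
      (H ⊔ K) ⊓ Subgroup.map (MulAut.conj g⁻¹).toMonoidHom (H ⊔ K) ≤ N)
    (k : ℕ) (hk : 0 < k) :
    rho G k = rho (↥(H ⊔ K)) k - (1 / (Nat.card K : ℚ)) * rho (↥H) k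
      + (1 / (Nat.card K : ℚ)) * rho (↥N) k := by
  classical
  set L : Subgroup G := H ⊔ K with hLdef
  have hHL : H ≤ L := le_sup_left
  have hKL : K ≤ L := le_sup_right
  -- cardinality facts
  have hHKtriv : H ⊓ K = ⊥ := by
    have h1 : H ⊓ K ≤ N ⊓ K := inf_le_inf_right K hHN
    rw [hNK₁] at h1
    exact le_bot_iff.mp h1
  have cardL : Nat.card ↥L = Nat.card H * Nat.card K := aux_card_sup H K hHK hHKtriv
  have cardG : Nat.card G = Nat.card N * Nat.card K := by
    have h1 := aux_card_sup N K (fun b hb a ha => hN.conj_mem a ha b) hNK₁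
    rwa [hNK₂, Subgroup.card_top] at h1
  -- L ⊓ N = H
  have hLNH : ∀ x : G, x ∈ L → x ∈ N → x ∈ H := by
    intro x hxL hxN
    obtain ⟨h, hh, y, hy, rfl⟩ := (aux_mem_sup H K hHK _).1 hxL
    have hyN : y ∈ N := by
      have hrw : y = h⁻¹ * (h * y) := by group
      rw [hrw]
      exact mul_mem (inv_mem (hHN hh)) hxN
    have hy1 : y = 1 := by
      have : y ∈ N ⊓ K := Subgroup.mem_inf.mpr ⟨hyN, hy⟩
      rwa [hNK₁, Subgroup.mem_bot] at this
    rw [hy1, mul_one]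
    exact hh
  -- coset characterization
  have cChar : ∀ x : G, x ∉ N → ∀ g₀ : G, g₀ * x * g₀⁻¹ ∈ L →
      ∀ g : G, (g * x * g⁻¹ ∈ L ↔ g * g₀⁻¹ ∈ L) := by
    intro x hxN g₀ hg₀ g
    constructor
    · intro hg
      by_contra ha
      have hkey := hint (g * g₀⁻¹) ha
      have hmem : g₀ * x * g₀⁻¹ ∈
          L ⊓ Subgroup.map (MulAut.conj (g * g₀⁻¹)⁻¹).toMonoidHom L := by
        refine Subgroup.mem_inf.mpr ⟨hg₀, ?_⟩
        refine Subgroup.mem_map.mpr ⟨g * x * g⁻¹, hg, ?_⟩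
        show (g * g₀⁻¹)⁻¹ * (g * x * g⁻¹) * ((g * g₀⁻¹)⁻¹)⁻¹ = g₀ * x * g₀⁻¹
        group
      have hxNc : g₀ * x * g₀⁻¹ ∈ N := hkey hmem
      apply hxN
      have := hN.conj_mem _ hxNc g₀⁻¹
      have hrw : g₀⁻¹ * (g₀ * x * g₀⁻¹) * g₀⁻¹⁻¹ = x := by group
      rwa [hrw] at this
    · intro hl
      have hrw : g * x * g⁻¹ = (g * g₀⁻¹) * (g₀ * x * g₀⁻¹) * (g * g₀⁻¹)⁻¹ := by group
      rw [hrw]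
      exact mul_mem (mul_mem hl hg₀) (inv_mem hl)
  -- fibers have size 0 or |L|
  have fib : ∀ x : G, x ∉ N →
      cnt G (fun g : G => g * x * g⁻¹ ∈ L) = 0 ∨
      cnt G (fun g : G => g * x * g⁻¹ ∈ L) = Nat.card ↥L := by
    intro x hxN
    by_cases hne : ∃ g₀ : G, g₀ * x * g₀⁻¹ ∈ L
    · right
      obtain ⟨g₀, hg₀⟩ := hne
      rw [cnt_congr (fun g => cChar x hxN g₀ hg₀ g)]
      exact cnt_coset L g₀⁻¹
    · left
      exact cnt_eq_zero fun g hg => hne ⟨g, hg⟩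
  -- conjugation invariance of predicates
  have hinvN : ∀ g x : G, (x ∉ N) ↔ (g * x * g⁻¹ ∉ N) := by
    intro g x
    constructor
    · intro hx hc
      apply hx
      have := hN.conj_mem _ hc g⁻¹
      have hrw : g⁻¹ * (g * x * g⁻¹) * g⁻¹⁻¹ = x := by group
      rwa [hrw] at this
    · intro hx hc
      exact hx (hN.conj_mem _ hc g)
  have hinvk : ∀ g x : G, (x ^ k = 1) ↔ ((g * x * g⁻¹) ^ k = 1) := by
    intro g x
    rw [conj_pow]
    constructor
    · intro h; rw [h]; group
    · intro h
      have : g⁻¹ * (g * x ^ k * g⁻¹) * g = x ^ k := by group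
      rw [← this, h]
      group
  -- named quantities
  set nH := Nat.card ↥H with hnH
  set nK := Nat.card ↥K with hnK
  set nN := Nat.card ↥N with hnN
  set nL := Nat.card ↥L with hnL
  set nG := Nat.card G with hnG
  set sH := cnt G (fun x : G => x ∈ H ∧ x ^ k = 1) with hsH
  set sN := cnt G (fun x : G => x ∈ N ∧ x ^ k = 1) with hsN
  set sL := cnt G (fun x : G => x ∈ L ∧ x ^ k = 1) with hsL
  set sG := cnt G (fun x : G => x ^ k = 1) with hsG
  set sOut := cnt G (fun x : G => x ∉ N ∧ x ^ k = 1) with hsOut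
  set nOut := cnt G (fun x : G => x ∉ N) with hnOut
  set rL := cnt G (fun y : G => (y ∉ N ∧ y ^ k = 1) ∧ y ∈ L) with hrL
  set rAll := cnt G (fun y : G => (y ∉ N) ∧ y ∈ L) with hrAll
  -- counting identities
  have idG : sG = sN + sOut := cnt_split (fun x : G => x ^ k = 1) (fun x => x ∈ N)
  have idL : sL = sH + rL := by
    rw [hsL, cnt_split (fun x : G => x ∈ L ∧ x ^ k = 1) (fun x => x ∈ N)]
    congr 1
    · rw [hsH]
      apply cnt_congr
      intro x
      constructor
      · rintro ⟨h1, h2, h3⟩; exact ⟨hLNH x h2 h1, h3⟩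
      · rintro ⟨h1, h2⟩; exact ⟨hHN h1, hHL h1, h2⟩
    · rw [hrL]
      apply cnt_congr
      intro x
      tauto
  have idLall : nL = nH + rAll := by
    rw [hnL, ← cnt_mem L, cnt_split (fun x : G => x ∈ L) (fun x => x ∈ N)]
    congr 1
    rw [hnH, ← cnt_mem H]
    apply cnt_congr
    intro x
    exact ⟨fun ⟨h1, h2⟩ => hLNH x h2 h1, fun h => ⟨hHN h, hHL h⟩⟩
  have idGall : nG = nN + nOut := by
    have h1 : cnt G (fun _ : G => True) = nG := by
      rw [hnG, cnt]
      exact Nat.card_congr (Equiv.subtypeUnivEquiv fun x => trivial)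
    rw [← h1, cnt_split (fun _ : G => True) (fun x => x ∈ N)]
    congr 1
    · rw [hnN, ← cnt_mem N]
      apply cnt_congr
      intro x
      tauto
    · rw [hnOut]
      apply cnt_congr
      intro x
      tauto
  -- coverage
  have coverSum : (∑ x : G, cnt G (fun g : G => (x ∉ N) ∧ g * x * g⁻¹ ∈ L))
      = ∑ x : G, (if x ∉ N then nL else 0) := by
    rw [← cnt_swap (fun x : G => x ∉ N) (fun g x => g * x * g⁻¹ ∈ L)]
    have hrows : ∀ g : G, cnt G (fun x : G => (x ∉ N) ∧ g * x * g⁻¹ ∈ L) = rAll :=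
      fun g => cnt_conj (fun x => x ∉ N) hinvN L g
    rw [Finset.sum_congr rfl fun g _ => hrows g, Finset.sum_const, Finset.card_univ,
      smul_eq_mul, ← Nat.card_eq_fintype_card, ← hnG]
    have hR : (∑ x : G, (if x ∉ N then nL else 0)) = nOut * nL := by
      rw [← Finset.sum_filter, Finset.sum_const, smul_eq_mul, ← cnt_eq_card_filter, ← hnOut]
    rw [hR]
    -- nG * rAll = nOut * nL
    have e1 : (nG : ℤ) = nN * nK := by exact_mod_cast cardG
    have e2 : (nL : ℤ) = nH * nK := by exact_mod_cast cardL
    have e3 : (nL : ℤ) = nH + rAll := by exact_mod_cast idLall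
    have e4 : (nG : ℤ) = nN + nOut := by exact_mod_cast idGall
    have : (nG : ℤ) * rAll = nOut * nL := by
      linear_combination (-(nH : ℤ)) * e1 + (nN : ℤ) * e2 - (nG : ℤ) * e3 + (nL : ℤ) * e4
    exact_mod_cast this
  have cover : ∀ x : G, x ∉ N → cnt G (fun g : G => g * x * g⁻¹ ∈ L) = nL := by
    have hle : ∀ x ∈ (univ : Finset G),
        cnt G (fun g : G => (x ∉ N) ∧ g * x * g⁻¹ ∈ L) ≤ (if x ∉ N then nL else 0) := by
      intro x _
      by_cases hx : x ∉ N
      · rw [if_pos hx, cnt_congr (q := fun g : G => g * x * g⁻¹ ∈ L) (fun g => by simp [hx])]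
        rcases fib x hx with h | h <;> omega
      · rw [if_neg hx, cnt_eq_zero fun g hg => hx hg.1]
    have hall := (Finset.sum_eq_sum_iff_of_le hle).1 coverSum
    intro x hx
    have h2 := hall x (Finset.mem_univ x)
    rw [if_pos hx, cnt_congr (q := fun g : G => g * x * g⁻¹ ∈ L) (fun g => by simp [hx])] at h2
    exact h2
  -- main count: sOut * nL = nG * rL
  have main : sOut * nL = nG * rL := by
    have h1 := cnt_swap (fun x : G => x ∉ N ∧ x ^ k = 1) (fun g x => g * x * g⁻¹ ∈ L)
    have hrows : ∀ g : G, cnt G (fun x : G => (x ∉ N ∧ x ^ k = 1) ∧ g * x * g⁻¹ ∈ L) = rL :=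
      fun g => cnt_conj (fun x => x ∉ N ∧ x ^ k = 1)
        (fun g x => and_congr (hinvN g x) (hinvk g x)) L g
    rw [Finset.sum_congr rfl fun g _ => hrows g, Finset.sum_const, Finset.card_univ,
      smul_eq_mul, ← Nat.card_eq_fintype_card, ← hnG] at h1
    rw [cnt_sum_const (fun x : G => x ∉ N ∧ x ^ k = 1) (fun g x => g * x * g⁻¹ ∈ L) nL
      (fun x hx => cover x hx.1), ← hsOut] at h1
    exact h1.symm
  -- translate rho's
  have rhoG : rho G k = (sG : ℚ) / (nG : ℚ) := rfl
  have rhoL : rho (↥L) k = (sL : ℚ) / (nL : ℚ) := by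
    rw [rho, cnt_root L k, hsL, hnL]
  have rhoH : rho (↥H) k = (sH : ℚ) / (nH : ℚ) := by
    rw [rho, cnt_root H k, hsH, hnH]
  have rhoN : rho (↥N) k = (sN : ℚ) / (nN : ℚ) := by
    rw [rho, cnt_root N k, hsN, hnN]
  rw [rhoG, rhoL, rhoH, rhoN]
  -- positivity
  have hK0 : (0 : ℚ) < nK := by exact_mod_cast Nat.card_pos (α := ↥K)
  have hH0 : (0 : ℚ) < nH := by exact_mod_cast Nat.card_pos (α := ↥H)
  have hN0 : (0 : ℚ) < nN := by exact_mod_cast Nat.card_pos (α := ↥N)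
  have hL0 : (0 : ℚ) < nL := by exact_mod_cast Nat.card_pos (α := ↥L)
  have hG0 : (0 : ℚ) < nG := by exact_mod_cast Nat.card_pos (α := G)
  have qG : (nG : ℚ) = nN * nK := by exact_mod_cast cardG
  have qL : (nL : ℚ) = nH * nK := by exact_mod_cast cardL
  have qsG : (sG : ℚ) = sN + sOut := by exact_mod_cast idG
  have qsL : (sL : ℚ) = sH + rL := by exact_mod_cast idL
  have qmain : (sOut : ℚ) * nL = nG * rL := by exact_mod_cast main
  have e1 : (sOut : ℚ) / nG = rL / nL := by
    rw [div_eq_div_iff hG0.ne' hL0.ne']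
    linarith [qmain]
  calc (sG : ℚ) / nG = sN / nG + sOut / nG := by rw [qsG, add_div]
    _ = sN / (nN * nK) + rL / nL := by rw [e1, qG]
    _ = sL / nL - 1 / nK * (sH / nH) + 1 / nK * (sN / nN) := by
        have e2 : (rL : ℚ) = sL - sH := by linarith [qsL]
        rw [e2, qL, sub_div]
        ring
end

section
/- Let G be a finite group, k a positive integer, and S a subset of G such that every element g ∈ G with g^k = 1 has a conjugate lying in S (i.e. S meets every conjugacy class of elements of order dividing k). Let L = ⟨S⟩ be the subgroup generated by S. Then ρ_k(G) ≤ ρ_k(L)/[N_G(L) : L] − 1/|N_G(L)| + 1/|G|. -/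
/-- If a subset `S` of a finite group `G` meets every conjugacy class of elements of order
dividing `k`, and `L = ⟨S⟩`, then `ρ_k(G) ≤ ρ_k(L)/[N_G(L) : L] - 1/|N_G(L)| + 1/|G|`. -/
theorem rho_le_of_meets_classes (G : Type) [Group G] [Fintype G] (k : ℕ) (hk : 0 < k)
    (S : Set G) (hS : ∀ g : G, g ^ k = 1 → ∃ x : G, x * g * x⁻¹ ∈ S) :
    rho G k ≤
      rho (↥(Subgroup.closure S)) k /
          ((Subgroup.closure S).relIndex (Subgroup.normalizer (Subgroup.closure S : Set G)) : ℚ)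
        - 1 / (Nat.card (Subgroup.normalizer (Subgroup.closure S : Set G)) : ℚ)
        + 1 / (Nat.card G : ℚ) := by
  classical
  set L := Subgroup.closure S with hL
  set N := Subgroup.normalizer (L : Set G) with hN
  have hLN : L ≤ N := Subgroup.le_normalizer
  -- Finsets
  set X : Finset G := Finset.univ.filter (fun g : G => g ^ k = 1 ∧ g ≠ 1) with hX
  set M : Finset G := Finset.univ.filter (fun g : G => g ∈ L ∧ g ^ k = 1 ∧ g ≠ 1) with hM
  -- the conjugates, indexed by cosets of N
  have hconj : ∀ (x : G) (n : G), n ∈ N → ∀ g : G, g ∈ L → n⁻¹ * g * n ∈ L := by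
    intro x n hn g hg
    have := (Subgroup.mem_normalizer_iff.mp (inv_mem hn) g).mp ?_
    · convert this using 2; group
    · simpa using hg
  -- covering claim
  have claim1 : X.card ≤ N.index * M.card := by
    have hsub : X ⊆ (Finset.univ : Finset (G ⧸ N)).biUnion
        (fun q => M.image (fun g => q.out * g * q.out⁻¹)) := by
      intro g hg
      simp only [hX, Finset.mem_filter, Finset.mem_univ, true_and] at hg
      obtain ⟨hgk, hg1⟩ := hg
      obtain ⟨x, hx⟩ := hS g hgk
      have hxL : x * g * x⁻¹ ∈ L := Subgroup.subset_closure hx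
      set q : G ⧸ N := QuotientGroup.mk x⁻¹ with hq
      have hmk : QuotientGroup.mk (x⁻¹ : G) = q.out := (QuotientGroup.out_eq' q).symm
      have hn0 : (x⁻¹)⁻¹ * q.out ∈ N := QuotientGroup.eq.mp hmk
      set n : G := x * q.out with hns
      have hn : n ∈ N := by simpa [hns] using hn0
      have hqe : q.out = x⁻¹ * n := by rw [hns]; group
      refine Finset.mem_biUnion.mpr ⟨q, Finset.mem_univ _, ?_⟩
      refine Finset.mem_image.mpr ⟨q.out⁻¹ * g * q.out, ?_, by group⟩
      simp only [hM, Finset.mem_filter, Finset.mem_univ, true_and]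
      refine ⟨?_, ?_, ?_⟩
      · have : q.out⁻¹ * g * q.out = n⁻¹ * (x * g * x⁻¹) * n := by
          rw [hqe]; group
        rw [this]
        exact hconj x n hn _ hxL
      · have : (q.out⁻¹ * g * q.out) ^ k = q.out⁻¹ * g ^ k * q.out⁻¹⁻¹ := by
          rw [← conj_pow]
          group
        rw [this, hgk]; group
      · intro h
        apply hg1
        have : g = q.out * (q.out⁻¹ * g * q.out) * q.out⁻¹ := by group
        rw [this, h]; group
    calc X.card ≤ _ := Finset.card_le_card hsub
      _ ≤ ∑ q : G ⧸ N, (M.image (fun g => q.out * g * q.out⁻¹)).card :=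
          Finset.card_biUnion_le
      _ ≤ ∑ _q : G ⧸ N, M.card := by
          refine Finset.sum_le_sum fun q _ => Finset.card_image_le
      _ = Fintype.card (G ⧸ N) * M.card := by rw [Finset.sum_const, smul_eq_mul,
          Finset.card_univ]
      _ = N.index * M.card := by rw [Subgroup.index, Nat.card_eq_fintype_card]
  -- cardinality of the rho numerators
  have claim2 : Nat.card {g : G // g ^ k = 1} = X.card + 1 := by
    rw [Nat.card_eq_fintype_card, Fintype.card_subtype]
    have : Finset.univ.filter (fun g : G => g ^ k = 1) = insert 1 X := by
      ext g
      simp only [hX, Finset.mem_filter, Finset.mem_univ, true_and, Finset.mem_insert]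
      constructor
      · intro h
        by_cases hg : g = 1
        · exact Or.inl hg
        · exact Or.inr ⟨h, hg⟩
      · rintro (rfl | ⟨h, _⟩)
        · exact one_pow k
        · exact h
    rw [this, Finset.card_insert_of_notMem (by simp [hX])]
  have claim3 : Nat.card {g : ↥L // g ^ k = 1} = M.card + 1 := by
    have e : {g : ↥L // g ^ k = 1} ≃ {g : G // g ∈ L ∧ g ^ k = 1} :=
      { toFun := fun g => ⟨(g : G), g.1.2, by
          have := g.2
          have : ((g.1 ^ k : ↥L) : G) = ((1 : ↥L) : G) := by rw [this]
          simpa using this⟩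
        invFun := fun g => ⟨⟨g.1, g.2.1⟩, by
          ext
          simpa using g.2.2⟩
        left_inv := fun g => by ext; rfl
        right_inv := fun g => by ext; rfl }
    rw [Nat.card_congr e, Nat.card_eq_fintype_card, Fintype.card_subtype]
    have : Finset.univ.filter (fun g : G => g ∈ L ∧ g ^ k = 1) = insert 1 M := by
      ext g
      simp only [hM, Finset.mem_filter, Finset.mem_univ, true_and, Finset.mem_insert]
      constructor
      · intro ⟨h1, h2⟩
        by_cases hg : g = 1
        · exact Or.inl hg
        · exact Or.inr ⟨h1, h2, hg⟩
      · rintro (rfl | ⟨h1, h2, _⟩)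
        · exact ⟨one_mem L, one_pow k⟩
        · exact ⟨h1, h2⟩
    rw [this, Finset.card_insert_of_notMem (by simp [hM])]
  -- index facts
  have hcard1 : Nat.card ↥N * N.index = Nat.card G := Subgroup.card_mul_index N
  have hcard2 : Nat.card ↥L * L.relIndex N = Nat.card ↥N := by
    have := Subgroup.card_mul_index (L.subgroupOf N)
    rwa [Nat.card_congr (Subgroup.subgroupOfEquivOfLe hLN).toEquiv] at this
  have hG0 : 0 < Nat.card G := Nat.card_pos
  have hN0 : 0 < Nat.card ↥N := Nat.card_pos
  have hL0 : 0 < Nat.card ↥L := Nat.card_pos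
  have hi0 : 0 < N.index := by
    rcases Nat.eq_zero_or_pos N.index with h | h
    · rw [h, mul_zero] at hcard1; omega
    · exact h
  simp only [rho, claim2, claim3]
  push_cast
  rw [div_div]
  have h2 : (Nat.card ↥L : ℚ) * (L.relIndex N : ℚ) = (Nat.card ↥N : ℚ) := by
    exact_mod_cast hcard2
  rw [h2]
  have hGq : (0:ℚ) < (Nat.card G : ℚ) := by exact_mod_cast hG0
  have hNq : (0:ℚ) < (Nat.card ↥N : ℚ) := by exact_mod_cast hN0
  have key : (X.card : ℚ) / (Nat.card G : ℚ) ≤ (M.card : ℚ) / (Nat.card ↥N : ℚ) := by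
    rw [div_le_div_iff₀ hGq hNq]
    have hx : (X.card : ℚ) ≤ (N.index : ℚ) * M.card := by exact_mod_cast claim1
    calc (X.card : ℚ) * (Nat.card ↥N) ≤ (N.index : ℚ) * M.card * Nat.card ↥N :=
          mul_le_mul_of_nonneg_right hx (by positivity)
      _ = (M.card : ℚ) * ((Nat.card ↥N : ℚ) * N.index) := by ring
      _ = (M.card : ℚ) * (Nat.card G : ℚ) := by
          congr 1
          exact_mod_cast hcard1
  have e1 : ((X.card : ℚ) + 1) / (Nat.card G : ℚ)
      = (X.card : ℚ) / (Nat.card G : ℚ) + 1 / (Nat.card G : ℚ) := by ring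
  have e2 : ((M.card : ℚ) + 1) / (Nat.card ↥N : ℚ) - 1 / (Nat.card ↥N : ℚ)
      = (M.card : ℚ) / (Nat.card ↥N : ℚ) := by ring
  rw [e1, e2]
  linarith [key]
end

section
/- Let G be a finite group, k a positive integer, and S a subset of G such that every element g ∈ G with g^k = 1 has a conjugate lying in S. If ρ_k(G) > 1/2, then the subgroup ⟨S⟩ generated by S is self-normalising in G, i.e. N_G(⟨S⟩) = ⟨S⟩. In particular, if k = p^a for a prime p and integer a ≥ 1 and ρ_{p^a}(G) > 1/2, then any Sylow p-subgroup P of G satisfies N_G(P) = P and ρ_{p^a}(P) > 1/2. -/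
open Subgroup Pointwise

private lemma conj_out_mem {G : Type} [Group G] (H : Subgroup G) {g : G} {x : G}
    (hx : x * g * x⁻¹ ∈ H) :
    ((QuotientGroup.mk x⁻¹ : G ⧸ (Subgroup.normalizer (H : Set G)))).out⁻¹ * g *
      ((QuotientGroup.mk x⁻¹ : G ⧸ (Subgroup.normalizer (H : Set G)))).out ∈ H := by
  set r := ((QuotientGroup.mk x⁻¹ : G ⧸ (Subgroup.normalizer (H : Set G)))).out with hr
  have h1 : (QuotientGroup.mk x⁻¹ : G ⧸ (Subgroup.normalizer (H : Set G))) = QuotientGroup.mk r :=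
    (QuotientGroup.out_eq' _).symm
  rw [QuotientGroup.eq, inv_inv] at h1
  -- h1 : x * r ∈ (Subgroup.normalizer (H : Set G))
  have hrx : r = x⁻¹ * (x * r) := by group
  have hmem := (Subgroup.mem_normalizer_iff.mp (inv_mem h1) (x * g * x⁻¹)).mp hx
  rw [inv_inv] at hmem
  have : r⁻¹ * g * r = (x * r)⁻¹ * (x * g * x⁻¹) * (x * r) := by
    rw [hrx]; group
  rw [this]
  simpa [mul_assoc] using hmem

/-- key counting injection -/
private lemma card_pow_le {G : Type} [Group G] [Fintype G] (k : ℕ) (H : Subgroup G)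
    (hS : ∀ g : G, g ^ k = 1 → ∃ x : G, x * g * x⁻¹ ∈ H) :
    Nat.card {g : G // g ^ k = 1} ≤
      (Subgroup.normalizer (H : Set G)).index * Nat.card {h : H // h ^ k = 1} := by
  classical
  rw [Subgroup.index_eq_card, ← Nat.card_prod]
  choose x hx using hS
  let f : {g : G // g ^ k = 1} → (G ⧸ (Subgroup.normalizer (H : Set G))) × {h : H // h ^ k = 1} := fun g =>
    ⟨QuotientGroup.mk (x g.1 g.2)⁻¹,
      ⟨⟨_, conj_out_mem H (hx g.1 g.2)⟩, by
        ext
        push_cast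
        set r := ((QuotientGroup.mk (x g.1 g.2)⁻¹ : G ⧸ (Subgroup.normalizer (H : Set G)))).out
        calc (r⁻¹ * g.1 * r) ^ k = (r⁻¹ * g.1 * r⁻¹⁻¹) ^ k := by rw [inv_inv]
        _ = r⁻¹ * g.1 ^ k * r⁻¹⁻¹ := conj_pow
        _ = 1 := by rw [g.2]; group⟩⟩
  have hf : Function.Injective f := by
    rintro ⟨g₁, h₁⟩ ⟨g₂, h₂⟩ hfe
    have e1 : (QuotientGroup.mk (x g₁ h₁)⁻¹ : G ⧸ (Subgroup.normalizer (H : Set G))) =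
        QuotientGroup.mk (x g₂ h₂)⁻¹ := congrArg Prod.fst hfe
    have e2 := congrArg (fun y => ((y.2 : {h : H // h ^ k = 1}) : H).1) hfe
    simp only [f] at e2
    rw [show ((QuotientGroup.mk (x g₁ h₁)⁻¹ : G ⧸ (Subgroup.normalizer (H : Set G)))).out =
        ((QuotientGroup.mk (x g₂ h₂)⁻¹ : G ⧸ (Subgroup.normalizer (H : Set G)))).out from congrArg _ e1] at e2
    exact Subtype.ext (by
      have := mul_left_cancel (mul_right_cancel e2)
      exact this)
  exact Nat.card_le_card_of_injective f hf

private lemma normalizer_eq_of_half {G : Type} [Group G] [Fintype G] {k : ℕ} (H : Subgroup G)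
    (hS : ∀ g : G, g ^ k = 1 → ∃ x : G, x * g * x⁻¹ ∈ H)
    (hρ : (1 : ℚ) / 2 < rho G k) : (Subgroup.normalizer (H : Set G)) = H := by
  by_contra hne
  have hle : H ≤ (Subgroup.normalizer (H : Set G)) := Subgroup.le_normalizer
  -- 2 * card H ≤ card N
  set N := (Subgroup.normalizer (H : Set G)) with hN
  have hcardHN : Nat.card (H.subgroupOf N) * (H.subgroupOf N).index = Nat.card N :=
    Subgroup.card_mul_index _
  have hcardeq : Nat.card (H.subgroupOf N) = Nat.card H :=
    Nat.card_congr (Subgroup.subgroupOfEquivOfLe hle).toEquiv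
  have hidx2 : 2 ≤ (H.subgroupOf N).index := by
    rcases Nat.lt_or_ge (H.subgroupOf N).index 2 with h | h
    · interval_cases h' : (H.subgroupOf N).index
      · exact absurd h' (Subgroup.index_ne_zero_of_finite)
      · exact absurd (le_antisymm (Subgroup.subgroupOf_eq_top.mp
          (Subgroup.index_eq_one.mp h')) hle) hne
    · exact h
  have h2H : 2 * Nat.card H ≤ Nat.card N := by
    calc 2 * Nat.card H = Nat.card (H.subgroupOf N) * 2 := by rw [hcardeq, mul_comm]
    _ ≤ Nat.card (H.subgroupOf N) * (H.subgroupOf N).index :=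
        Nat.mul_le_mul_left _ hidx2
    _ = Nat.card N := hcardHN
  have hTH : Nat.card {h : H // h ^ k = 1} ≤ Nat.card H :=
    Nat.card_le_card_of_injective Subtype.val Subtype.val_injective
  have hmain : 2 * Nat.card {g : G // g ^ k = 1} ≤ Nat.card G := by
    calc 2 * Nat.card {g : G // g ^ k = 1}
        ≤ 2 * (N.index * Nat.card {h : H // h ^ k = 1}) := by
          exact Nat.mul_le_mul_left _ (card_pow_le k H hS)
    _ ≤ 2 * (N.index * Nat.card H) := by
          exact Nat.mul_le_mul_left _ (Nat.mul_le_mul_left _ hTH)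
    _ = N.index * (2 * Nat.card H) := by ring
    _ ≤ N.index * Nat.card N := Nat.mul_le_mul_left _ h2H
    _ = Nat.card G := Subgroup.index_mul_card N
  -- contradiction with rho > 1/2
  have hGpos : (0 : ℚ) < (Nat.card G : ℚ) := by
    exact_mod_cast Nat.card_pos
  rw [rho, div_lt_div_iff₀ two_pos hGpos] at hρ
  have : (Nat.card G : ℚ) < 2 * Nat.card {g : G // g ^ k = 1} := by linarith
  have : Nat.card G < 2 * Nat.card {g : G // g ^ k = 1} := by exact_mod_cast this
  omega

/-- If a subset `S` of a finite group `G` meets every conjugacy class of elements of order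
dividing `k` and `ρ_k(G) > 1/2`, then `⟨S⟩` is self-normalising. In particular, if
`k = p ^ a` for a prime `p` and `a ≥ 1`, then every Sylow `p`-subgroup `P` of `G` is
self-normalising and satisfies `ρ_{p^a}(P) > 1/2`. -/
theorem closure_self_normalizing_of_rho_gt_half (G : Type) [Group G] [Fintype G]
    (k : ℕ) (hk : 0 < k) (S : Set G)
    (hS : ∀ g : G, g ^ k = 1 → ∃ x : G, x * g * x⁻¹ ∈ S)
    (hρ : (1 : ℚ) / 2 < rho G k) :
    Subgroup.normalizer (Subgroup.closure S : Set G) = Subgroup.closure S ∧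
    (∀ (p a : ℕ), p.Prime → 1 ≤ a → k = p ^ a → ∀ P : Sylow p G,
      Subgroup.normalizer ((P : Subgroup G) : Set G) = (P : Subgroup G) ∧
      (1 : ℚ) / 2 < rho (↥(P : Subgroup G)) (p ^ a)) := by
  constructor
  · exact normalizer_eq_of_half _ (fun g hg => by
      obtain ⟨x, hx⟩ := hS g hg
      exact ⟨x, Subgroup.subset_closure hx⟩) hρ
  · rintro p a hp ha rfl P
    haveI := Fact.mk hp
    have hP : ∀ g : G, g ^ p ^ a = 1 → ∃ x : G, x * g * x⁻¹ ∈ (P : Subgroup G) := by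
      intro g hg
      have hord : orderOf g ∣ p ^ a := orderOf_dvd_of_pow_eq_one hg
      obtain ⟨b, _, hb⟩ := (Nat.dvd_prime_pow hp).mp hord
      have hpg : IsPGroup p (Subgroup.zpowers g) :=
        IsPGroup.of_card (by rw [Nat.card_zpowers, hb])
      obtain ⟨Q, hQ⟩ := hpg.exists_le_sylow
      obtain ⟨x, hx⟩ := MulAction.exists_smul_eq G Q P
      refine ⟨x, ?_⟩
      have hgQ : g ∈ (Q : Subgroup G) := hQ (Subgroup.mem_zpowers g)
      have : x * g * x⁻¹ ∈ ((x • Q : Sylow p G) : Subgroup G) := by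
        rw [Sylow.smul_def, Sylow.pointwise_smul_def]
        simpa using Subgroup.smul_mem_pointwise_smul g (MulAut.conj x) _ hgQ
      rwa [hx] at this
    have hnorm : Subgroup.normalizer ((P : Subgroup G) : Set G) = (P : Subgroup G) :=
      normalizer_eq_of_half _ hP hρ
    refine ⟨hnorm, ?_⟩
    -- rho P > 1/2
    have hcard := card_pow_le (p ^ a) (P : Subgroup G) hP
    rw [hnorm] at hcard
    have hPpos : (0 : ℚ) < (Nat.card (P : Subgroup G) : ℚ) := by exact_mod_cast Nat.card_pos
    have hGpos : (0 : ℚ) < (Nat.card G : ℚ) := by exact_mod_cast Nat.card_pos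
    have hidxpos : (0 : ℚ) < ((P : Subgroup G).index : ℚ) := by
      exact_mod_cast Nat.pos_of_ne_zero Subgroup.index_ne_zero_of_finite
    have hGeq : (Nat.card G : ℚ) = ((P : Subgroup G).index : ℚ) *
        (Nat.card (P : Subgroup G) : ℚ) := by
      exact_mod_cast (Subgroup.index_mul_card (P : Subgroup G)).symm
    have hle : rho G (p ^ a) ≤ rho (↥(P : Subgroup G)) (p ^ a) := by
      rw [rho, rho, hGeq, div_le_div_iff₀ (by positivity) hPpos]
      have : (Nat.card {g : G // g ^ p ^ a = 1} : ℚ) ≤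
          ((P : Subgroup G).index : ℚ) *
            (Nat.card {h : (P : Subgroup G) // h ^ p ^ a = 1} : ℚ) := by
        exact_mod_cast hcard
      calc (Nat.card {g : G // g ^ p ^ a = 1} : ℚ) * (Nat.card (P : Subgroup G) : ℚ)
          ≤ ((P : Subgroup G).index : ℚ) *
            (Nat.card {h : (P : Subgroup G) // h ^ p ^ a = 1} : ℚ) *
            (Nat.card (P : Subgroup G) : ℚ) := by
            apply mul_le_mul_of_nonneg_right this (le_of_lt hPpos)
      _ = (Nat.card {h : (P : Subgroup G) // h ^ p ^ a = 1} : ℚ) *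
            (((P : Subgroup G).index : ℚ) * (Nat.card (P : Subgroup G) : ℚ)) := by ring
    exact lt_of_lt_of_le hρ hle
end

section
/- Let G be a finite group, p a prime, f a positive integer, N a normal subgroup of G, and P a subgroup of G containing N such that P/N is a Sylow p-subgroup of G/N. Then ρ_{p^f}(G) ≤ ρ_{p^f}(P). -/
/-- Every element of `p`-power order lies in some conjugate of the preimage `P`
of a Sylow `p`-subgroup of `G ⧸ N`. -/
lemma exists_conj_mem_aux (G : Type) [Group G] [Fintype G]
    (p : ℕ) (hp : p.Prime) (f : ℕ)
    (N : Subgroup G) [N.Normal] (P : Subgroup G) (hNP : N ≤ P)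
    (hP : ∃ Q : Sylow p (G ⧸ N),
      (Q : Subgroup (G ⧸ N)) = Subgroup.map (QuotientGroup.mk' N) P)
    (g : G) (hg : g ^ p ^ f = 1) : ∃ y : G, y⁻¹ * g * y ∈ P := by
  classical
  haveI : Fact p.Prime := ⟨hp⟩
  obtain ⟨Q, hQ⟩ := hP
  set q : G ⧸ N := QuotientGroup.mk g with hqdef
  have hq : q ^ p ^ f = 1 := by
    have := congrArg (QuotientGroup.mk (s := N)) hg
    simpa using this
  have hpg : IsPGroup p (Subgroup.zpowers q) := by
    intro x
    refine ⟨f, ?_⟩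
    obtain ⟨m, hm⟩ := Subgroup.mem_zpowers_iff.mp x.2
    ext
    push_cast [← hm]
    rw [← zpow_natCast, ← zpow_mul, mul_comm, zpow_mul, zpow_natCast, hq, one_zpow]
  obtain ⟨R, hR⟩ := hpg.exists_le_sylow
  obtain ⟨z, hz⟩ := MulAction.exists_smul_eq (G ⧸ N) Q R
  obtain ⟨y, hy⟩ := QuotientGroup.mk_surjective z
  have hmem : q ∈ ((z • Q : Sylow p (G ⧸ N)) : Subgroup (G ⧸ N)) := by
    rw [hz]; exact hR (Subgroup.mem_zpowers q)
  have hmem2 : z⁻¹ * q * z ∈ (Q : Subgroup (G ⧸ N)) := by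
    rw [Sylow.smul_def, Sylow.pointwise_smul_def,
      Subgroup.mem_pointwise_smul_iff_inv_smul_mem] at hmem
    simpa [MulAut.smul_def] using hmem
  rw [hQ] at hmem2
  refine ⟨y, ?_⟩
  have hmk : QuotientGroup.mk' N (y⁻¹ * g * y) ∈ Subgroup.map (QuotientGroup.mk' N) P := by
    simpa [← hy, hqdef, mul_assoc] using hmem2
  have : y⁻¹ * g * y ∈
      Subgroup.comap (QuotientGroup.mk' N) (Subgroup.map (QuotientGroup.mk' N) P) := hmk
  rwa [Subgroup.comap_map_eq_self (by rw [QuotientGroup.ker_mk']; exact hNP)] at this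

/-- The double-counting argument: if every element of order dividing `k` is conjugate
into `P`, then `|S_k(G)| · |P| ≤ |G| · |S_k(P)|`. -/
lemma card_mul_le_aux (G : Type) [Group G] [Fintype G] [DecidableEq G] (P : Subgroup G)
    [Fintype ↥P] {k : ℕ} [DecidablePred fun g : G => g ^ k = 1]
    [DecidablePred fun h : ↥P => h ^ k = 1]
    (hconj : ∀ g : G, g ^ k = 1 → ∃ y : G, y⁻¹ * g * y ∈ P) :
    (Finset.univ.filter fun g : G => g ^ k = 1).card * Fintype.card P ≤
      Fintype.card G * (Finset.univ.filter fun h : ↥P => h ^ k = 1).card := by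
  classical
  set SG := Finset.univ.filter fun g : G => g ^ k = 1 with hSG
  set SP := Finset.univ.filter fun h : ↥P => h ^ k = 1 with hSP
  calc SG.card * Fintype.card P = ∑ _g ∈ SG, Fintype.card P := by
        rw [Finset.sum_const, smul_eq_mul]
    _ ≤ ∑ g ∈ SG, (Finset.univ.filter fun x : G => x⁻¹ * g * x ∈ P).card := by
        refine Finset.sum_le_sum fun g hg => ?_
        obtain ⟨y, hy⟩ := hconj g (by simpa [hSG] using hg)
        rw [← Fintype.card_subtype]
        refine Fintype.card_le_of_injective
          (fun h => ⟨y * (h : G), by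
            have : (y * h)⁻¹ * g * (y * h) = (h : G)⁻¹ * (y⁻¹ * g * y) * h := by
              group
            rw [this]
            exact mul_mem (mul_mem (inv_mem h.2) hy) h.2⟩) ?_
        intro a b hab
        have h2 : y * (a : G) = y * (b : G) := congrArg Subtype.val hab
        exact Subtype.ext (mul_left_cancel h2)
    _ = ∑ x : G, (SG.filter fun g => x⁻¹ * g * x ∈ P).card := by
        have hcp : ∀ (s : Finset G) (q : G → Prop) [DecidablePred q],
            (s.filter q).card = ∑ a ∈ s, if q a then 1 else 0 := fun s q _ =>
          Finset.card_filter q s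
        rw [Finset.sum_congr rfl fun g (_ : g ∈ SG) => hcp Finset.univ fun x => x⁻¹ * g * x ∈ P,
          Finset.sum_congr rfl fun x (_ : x ∈ Finset.univ) => hcp SG fun g => x⁻¹ * g * x ∈ P]
        exact Finset.sum_comm
    _ = ∑ _x : G, SP.card := by
        refine Finset.sum_congr rfl fun x _ => ?_
        refine Finset.card_bij' (fun g hg => (⟨x⁻¹ * g * x,
            (Finset.mem_filter.mp hg).2⟩ : ↥P))
          (fun h _ => x * (h : G) * x⁻¹) ?_ ?_ ?_ ?_
        · intro g hg
          have hg1 : g ^ k = 1 := by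
            have := (Finset.mem_filter.mp (Finset.mem_filter.mp hg).1).2
            simpa [hSG] using this
          simp only [hSP, Finset.mem_filter, Finset.mem_univ, true_and]
          ext
          push_cast
          rw [show x⁻¹ * g * x = x⁻¹ * g * x⁻¹⁻¹ by rw [inv_inv], conj_pow, hg1]
          simp
        · intro h hh
          have hh1 : (h : ↥P) ^ k = 1 := by simpa [hSP] using hh
          simp only [Finset.mem_filter, Finset.mem_univ, true_and, hSG]
          constructor
          · have : ((h : G)) ^ k = 1 := by
              have := congrArg (Subtype.val) hh1
              push_cast at this
              exact this
            rw [conj_pow, this]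
            simp
          · simpa [mul_assoc] using h.2
        · intro g hg; group
        · intro h hh; ext; push_cast; group
    _ = Fintype.card G * SP.card := by
        rw [Finset.sum_const, smul_eq_mul, Finset.card_univ]

/-- If `N ⊴ G`, `N ≤ P ≤ G`, and `P/N` is a Sylow `p`-subgroup of `G/N`, then
`ρ_{p^f}(G) ≤ ρ_{p^f}(P)` for every `f > 0`. -/
theorem rho_le_rho_sylow_preimage (G : Type) [Group G] [Fintype G]
    (p : ℕ) (hp : p.Prime) (f : ℕ) (hf : 0 < f)
    (N : Subgroup G) [N.Normal] (P : Subgroup G) (hNP : N ≤ P)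
    (hP : ∃ Q : Sylow p (G ⧸ N),
      (Q : Subgroup (G ⧸ N)) = Subgroup.map (QuotientGroup.mk' N) P) :
    rho G (p ^ f) ≤ rho (↥P) (p ^ f) := by
  classical
  letI : Fintype ↥P := Fintype.ofFinite _
  have hconj : ∀ g : G, g ^ p ^ f = 1 → ∃ y : G, y⁻¹ * g * y ∈ P :=
    exists_conj_mem_aux G p hp f N P hNP hP
  have key := card_mul_le_aux G P (k := p ^ f) hconj
  have hG : Nat.card {g : G // g ^ p ^ f = 1} =
      (Finset.univ.filter fun g : G => g ^ p ^ f = 1).card := by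
    rw [Nat.card_eq_fintype_card]
    convert Fintype.card_subtype _ using 2
  have hPP : Nat.card {h : ↥P // h ^ p ^ f = 1} =
      (Finset.univ.filter fun h : ↥P => h ^ p ^ f = 1).card := by
    rw [Nat.card_eq_fintype_card]
    convert Fintype.card_subtype _ using 2
  unfold rho
  rw [hG, hPP, Nat.card_eq_fintype_card, Nat.card_eq_fintype_card,
    div_le_div_iff₀ (by exact_mod_cast Fintype.card_pos) (by exact_mod_cast Fintype.card_pos)]
  calc ((Finset.univ.filter fun g : G => g ^ p ^ f = 1).card : ℚ) * Fintype.card ↥P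
      = (((Finset.univ.filter fun g : G => g ^ p ^ f = 1).card * Fintype.card ↥P : ℕ) : ℚ) := by
        push_cast; ring
    _ ≤ ((Fintype.card G * (Finset.univ.filter fun h : ↥P => h ^ p ^ f = 1).card : ℕ) : ℚ) := by
        exact_mod_cast key
    _ = ((Finset.univ.filter fun h : ↥P => h ^ p ^ f = 1).card : ℚ) * Fintype.card G := by
        push_cast; ring
end
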